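/- arXiv:1504.04074 — 7 statements merged into one kernel-verified Lean document; each statement's English description precedes it below -/
import Mathlib

section
/- (Lemma 2) In the single-user setup, suppose Q[0] = 0 and, for every frame k, the action α_k is chosen as a maximizer over 𝒜 of (V B̄ φ(α) − Q[k] p(α)) / (1 + φ(α)/λ), and Q[k+1] = max{Q[k] + p(α_k) − β T[k], 0} where T[k] ≥ 1. Then for all k ≥ 0: Q[k] ≤ max{ V B̄ / p^min + p^max − β, 0 }. -/
/-!
Above the threshold `V B̄ / p^min` every non-idle action has a negative ratio
`(V B̄ φ - Q p) / (1 + φ / λ)`, while the idle action scores `0`; so the maximizer idles and the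
queue cannot grow. Below the threshold one frame adds at most `p^max - β`.
-/

open Finset

theorem queue_le_of_arrival_le {Q x : ℕ → ℝ} {T : ℕ → ℕ} {θ pmax β : ℝ} (hβ : 0 ≤ β)
    (hT : ∀ k, 1 ≤ T k) (hQ0 : Q 0 = 0)
    (hQrec : ∀ k, Q (k + 1) = max (Q k + x k - β * (T k : ℝ)) 0)
    (hx : ∀ k, x k ≤ pmax) (hx_idle : ∀ k, θ < Q k → x k ≤ 0) :
    ∀ k, Q k ≤ max (θ + pmax - β) 0 := by
  intro k
  induction k with
  | zero => exact hQ0 ▸ le_max_right _ _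
  | succ n ih =>
    have hβT : β ≤ β * (T n : ℝ) := le_mul_of_one_le_right hβ (by exact_mod_cast hT n)
    rw [hQrec n]
    refine max_le ?_ (le_max_right _ _)
    by_cases hθ : Q n ≤ θ
    · exact le_max_of_le_left (by linarith [hx n])
    · exact ih.trans' (by linarith [hx_idle n (not_le.mp hθ)])

theorem ratio_neg_of_div_lt {c q lam pmin pa φa : ℝ} (hc : 0 ≤ c) (hpmin : 0 < pmin)
    (hpa : pmin ≤ pa) (hφa : 0 ≤ φa) (hφa' : φa ≤ 1) (hlam : 0 < lam) (hq : c / pmin < q) :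
    (c * φa - q * pa) / (1 + φa / lam) < 0 := by
  have hq' : c < q * pmin := (div_lt_iff₀ hpmin).mp hq
  have hq0 : 0 < q := (div_nonneg hc hpmin.le).trans_lt hq
  refine div_neg_of_neg_of_pos ?_ (by positivity)
  nlinarith [mul_le_of_le_one_right hc hφa', mul_le_mul_of_nonneg_left hpa hq0.le]

theorem stmt2_general {A : Type*} [Fintype A] [DecidableEq A] (zero : A)
    (p φ : A → ℝ)
    (hp0 : p zero = 0)
    (hφ : ∀ a, 0 ≤ φ a ∧ φ a ≤ 1) (hφ0 : φ zero = 0)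
    (V B lam β : ℝ) (hV : 0 ≤ V) (hB : 0 < B) (hlam : 0 < lam) (hβ : 0 < β)
    (hne : (Finset.univ.filter (fun a : A => a ≠ zero)).Nonempty)
    (pmin pmax : ℝ)
    (hpmin : pmin = (Finset.univ.filter (fun a : A => a ≠ zero)).inf' hne p)
    (hpmax : pmax = (Finset.univ.filter (fun a : A => a ≠ zero)).sup' hne p)
    (hpminpos : 0 < pmin)
    (T : ℕ → ℕ) (hT : ∀ k, 1 ≤ T k)
    (α : ℕ → A) (Q : ℕ → ℝ) (hQ0 : Q 0 = 0)
    (hopt : ∀ k (a : A), (V * B * φ a - Q k * p a) / (1 + φ a / lam) ≤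
      (V * B * φ (α k) - Q k * p (α k)) / (1 + φ (α k) / lam))
    (hQrec : ∀ k, Q (k + 1) = max (Q k + p (α k) - β * (T k : ℝ)) 0) :
    ∀ k, Q k ≤ max (V * B / pmin + pmax - β) 0 := by
  have hmem {a : A} (ha : a ≠ zero) : a ∈ univ.filter (· ≠ zero) := by simp [ha]
  have hpmin_le {a : A} (ha : a ≠ zero) : pmin ≤ p a := hpmin ▸ inf'_le p (hmem ha)
  have hp_le (a : A) : p a ≤ pmax := by
    by_cases ha : a = zero
    · obtain ⟨b, hb⟩ := hne
      have hb' : pmin ≤ p b := hpmin_le (mem_filter.mp hb).2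
      rw [ha, hp0]
      linarith [hpmax ▸ le_sup' p hb]
    · exact hpmax ▸ le_sup' p (hmem ha)
  have hidle (k : ℕ) (hk : V * B / pmin < Q k) : α k = zero := by
    by_contra hα
    have hratio := hopt k zero
    simp only [hφ0, hp0, mul_zero, sub_zero, zero_div] at hratio
    exact hratio.not_gt <| ratio_neg_of_div_lt (mul_nonneg hV hB.le) hpminpos
      (hpmin_le hα) (hφ _).1 (hφ _).2 hlam hk
  exact queue_le_of_arrival_le hβ.le hT hQ0 hQrec (fun k => hp_le (α k))
    fun k hk => (congrArg p (hidle k hk)).trans hp0 |>.le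

/-- Lemma 2: Deterministic bound on the virtual queue under the
single-user drift-plus-penalty ratio maximizing policy. -/
theorem stmt2 {A : Type*} [Fintype A] [DecidableEq A] (zero : A)
    (p φ : A → ℝ)
    (hp : ∀ a, 0 ≤ p a) (hp0 : p zero = 0)
    (hφ : ∀ a, 0 ≤ φ a ∧ φ a ≤ 1) (hφ0 : φ zero = 0)
    (V B lam β : ℝ) (hV : 0 ≤ V) (hB : 0 < B) (hlam : 0 < lam) (hβ : 0 < β)
    (hne : (Finset.univ.filter (fun a : A => a ≠ zero)).Nonempty)
    (pmin pmax : ℝ)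
    (hpmin : pmin = (Finset.univ.filter (fun a : A => a ≠ zero)).inf' hne p)
    (hpmax : pmax = (Finset.univ.filter (fun a : A => a ≠ zero)).sup' hne p)
    (hpminpos : 0 < pmin)
    (T : ℕ → ℕ) (hT : ∀ k, 1 ≤ T k)
    (α : ℕ → A) (Q : ℕ → ℝ) (hQ0 : Q 0 = 0)
    (hopt : ∀ k (a : A), (V * B * φ a - Q k * p a) / (1 + φ a / lam) ≤
      (V * B * φ (α k) - Q k * p (α k)) / (1 + φ (α k) / lam))
    (hQrec : ∀ k, Q (k + 1) = max (Q k + p (α k) - β * (T k : ℝ)) 0) :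
    ∀ k, Q k ≤ max (V * B / pmin + pmax - β) 0 :=
  stmt2_general zero p φ hp0 hφ hφ0 V B lam β hV hB hlam hβ hne pmin pmax hpmin hpmax hpminpos T hT
    α Q hQ0 hopt hQrec
end

section
/- (Theorem 1, power-constraint part; sample-path result) In the single-user setup, suppose Q[0] = 0, each frame-start action α_k is a maximizer over 𝒜 of (V B̄ φ(α) − Q[k] p(α)) / (1 + φ(α)/λ), the queue is updated by Q[k+1] = max{Q[k] + p(α_k) − β T[k], 0} with integer frame lengths T[k] ≥ 1 with frame-start slots t_0 = 0 and t_{k+1} = t_k + T[k], and the slot power sequence satisfies p(t_k) = p(α_k) and p(t) = 0 at all non-frame-start slots. Then limsup_{T→∞} (1/T) Σ_{t=0}^{T−1} p(t) ≤ β, regardless of the actual values of the frame lengths T[k]. -/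
/-!
Choosing the idle action shows that the maximal ratio is nonnegative, so `Q[k] p(α_k) ≤ V B̄`.
Hence, once `Q[k] > V B̄ / p^min`, the policy idles and the queue cannot grow; the queue thus stays
below `V B̄ / p^min + p^max`. Since the queue update telescopes to
`Σ_{k<K} p(α_k) ≤ Q[K] + β (t_K - t_0)`, the energy spent before slot `n` is at most
`β n + O(1)`: only the last frame started before `n` can overshoot, and by at most `p^max`.
-/

open Filter Finset

lemma sum_range_le_of_queue_step {a b Q : ℕ → ℝ} (hQ : ∀ k, Q k + a k - b k ≤ Q (k + 1))
    (K : ℕ) : ∑ k ∈ range K, a k ≤ Q K - Q 0 + ∑ k ∈ range K, b k := by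
  rw [← sum_range_sub Q, ← sum_add_distrib]
  exact sum_le_sum fun k _ => by linarith [hQ k]

lemma queue_le_of_idle_above {a b Q : ℕ → ℝ} {c M : ℝ}
    (hQ : ∀ k, Q (k + 1) = max (Q k + a k - b k) 0) (hb : ∀ k, 0 ≤ b k) (ha : ∀ k, a k ≤ M)
    (hidle : ∀ k, c < Q k → a k ≤ 0) (hcM : 0 ≤ c + M) (hQ0 : Q 0 ≤ c + M) :
    ∀ k, Q k ≤ c + M := by
  intro k
  induction k with
  | zero => exact hQ0
  | succ k ih =>
    rw [hQ k]
    refine max_le ?_ hcM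
    rcases le_or_gt (Q k) c with hle | hlt
    · linarith [ha k, hb k]
    · linarith [hidle k hlt, hb k]

section RatioPolicy

variable {A : Type*} (zero : A) (p φ : A → ℝ) {W lam : ℝ}

/-- Comparing with the idle action, whose ratio is `0`. -/
lemma mul_le_of_ratio_le (hp0 : p zero = 0) (hφ0 : φ zero = 0) (hφ : ∀ a, 0 ≤ φ a ∧ φ a ≤ 1)
    (hW : 0 ≤ W) (hlam : 0 < lam) {q : ℝ} {a : A}
    (hopt : ∀ b, (W * φ b - q * p b) / (1 + φ b / lam) ≤ (W * φ a - q * p a) / (1 + φ a / lam)) :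
    q * p a ≤ W := by
  have hratio : 0 ≤ (W * φ a - q * p a) / (1 + φ a / lam) := by
    simpa [hp0, hφ0] using hopt zero
  have hden : 0 < 1 + φ a / lam := by
    have := div_nonneg (hφ a).1 hlam.le
    linarith
  have hnum : 0 ≤ W * φ a - q * p a := by simpa using (le_div_iff₀ hden).mp hratio
  nlinarith [(hφ a).2]

lemma power_nonpos_of_div_lt {pmin q : ℝ} {a : A} (hp0 : p zero = 0)
    (hpmin : ∀ b, b ≠ zero → pmin ≤ p b) (hpminpos : 0 < pmin) (hW : 0 ≤ W)
    (hmul : q * p a ≤ W) (hq : W / pmin < q) : p a ≤ 0 := by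
  by_contra! hpos
  have hq' : W < q * pmin := (div_lt_iff₀ hpminpos).mp hq
  have hqpos : 0 < q := (div_nonneg hW hpminpos.le).trans_lt hq
  have ha : a ≠ zero := fun h => hpos.ne' (h ▸ hp0)
  nlinarith [hpmin a ha]

end RatioPolicy

lemma sum_range_le_of_frame_sums_le {t : ℕ → ℕ} (ht : Function.Injective t) {u : ℕ → ℝ}
    {C β : ℝ} (hu : ∀ s, 0 ≤ u s) (hsupp : ∀ s, (∀ k, s ≠ t k) → u s = 0) (hC : 0 ≤ C)
    (hβ : 0 ≤ β) (hframe : ∀ J, ∑ k ∈ range (J + 1), u (t k) ≤ C + β * t J) (n : ℕ) :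
    ∑ s ∈ range n, u s ≤ C + β * n := by
  rw [← sum_preimage t (range n) ht.injOn u fun s _ hs => hsupp s fun k hk => hs ⟨k, hk.symm⟩]
  set F := (range n).preimage t ht.injOn
  rcases F.eq_empty_or_nonempty with hF | hF
  · rw [hF, sum_empty]
    positivity
  set J := F.max' hF
  have htJ : t J < n := by simpa [F] using F.max'_mem hF
  have hsub : F ⊆ range (J + 1) := fun k hk => mem_range_succ_iff.mpr (F.le_max' k hk)
  calc ∑ k ∈ F, u (t k) ≤ ∑ k ∈ range (J + 1), u (t k) :=
        sum_le_sum_of_subset_of_nonneg hsub fun k _ _ => hu (t k)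
    _ ≤ C + β * t J := hframe J
    _ ≤ C + β * n := by gcongr

lemma limsup_avg_le_of_sum_range_le {u : ℕ → ℝ} {C β : ℝ} (hu : ∀ s, 0 ≤ u s)
    (hsum : ∀ n, ∑ s ∈ range n, u s ≤ C + β * n) :
    limsup (fun n : ℕ => (1 / (n : ℝ)) * ∑ s ∈ range n, u s) atTop ≤ β := by
  have hlim : Tendsto (fun n : ℕ => β + C / (n : ℝ)) atTop (nhds β) := by
    simpa using tendsto_const_nhds.add (tendsto_const_div_atTop_nhds_zero_nat C)
  have hev : ∀ᶠ n : ℕ in atTop, (1 / (n : ℝ)) * ∑ s ∈ range n, u s ≤ β + C / n := by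
    filter_upwards [eventually_ge_atTop 1] with n hn
    have hnpos : (0 : ℝ) < n := by exact_mod_cast hn
    rw [one_div, inv_mul_le_iff₀ hnpos, mul_add, mul_div_cancel₀ C hnpos.ne']
    linarith [hsum n]
  have hcobdd : IsCoboundedUnder (· ≤ ·) atTop
      (fun n : ℕ => (1 / (n : ℝ)) * ∑ s ∈ range n, u s) :=
    (isBoundedUnder_of ⟨0, fun n => by
      have := sum_nonneg fun s (_ : s ∈ range n) => hu s
      positivity⟩).isCoboundedUnder_le
  calc _ ≤ limsup (fun n : ℕ => β + C / (n : ℝ)) atTop :=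
        limsup_le_limsup hev hcobdd hlim.isBoundedUnder_le
    _ = β := hlim.limsup_eq

theorem stmt3_general {A : Type*} [Fintype A] [DecidableEq A] (zero : A)
    (p φ : A → ℝ)
    (hp : ∀ a, 0 ≤ p a) (hp0 : p zero = 0)
    (hφ : ∀ a, 0 ≤ φ a ∧ φ a ≤ 1) (hφ0 : φ zero = 0)
    (V B lam β : ℝ) (hV : 0 ≤ V) (hB : 0 < B) (hlam : 0 < lam) (hβ : 0 < β)
    (hne : (Finset.univ.filter (fun a : A => a ≠ zero)).Nonempty)
    (pmin : ℝ)
    (hpmin : pmin = (Finset.univ.filter (fun a : A => a ≠ zero)).inf' hne p)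
    (hpminpos : 0 < pmin)
    (T : ℕ → ℕ) (hT : ∀ k, 1 ≤ T k)
    (t : ℕ → ℕ) (htrec : ∀ k, t (k + 1) = t k + T k)
    (α : ℕ → A) (Q : ℕ → ℝ) (hQ0 : Q 0 = 0)
    (hopt : ∀ k (a : A), (V * B * φ a - Q k * p a) / (1 + φ a / lam) ≤
      (V * B * φ (α k) - Q k * p (α k)) / (1 + φ (α k) / lam))
    (hQrec : ∀ k, Q (k + 1) = max (Q k + p (α k) - β * (T k : ℝ)) 0)
    (pslot : ℕ → ℝ)
    (hps1 : ∀ k, pslot (t k) = p (α k))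
    (hps0 : ∀ s : ℕ, (∀ k, s ≠ t k) → pslot s = 0) :
    limsup (fun T' : ℕ => (1 / (T' : ℝ)) * ∑ s ∈ Finset.range T', pslot s) atTop ≤ β := by
  obtain ⟨pmax, hpmax⟩ := Finite.exists_le p
  have hW : 0 ≤ V * B := mul_nonneg hV hB.le
  have hpmax0 : 0 ≤ pmax := hp0 ▸ hpmax zero
  have hc : 0 ≤ V * B / pmin + pmax := by linarith [div_nonneg hW hpminpos.le]
  have hpmin' : ∀ a, a ≠ zero → pmin ≤ p a := fun a ha => hpmin ▸ inf'_le p (by simpa using ha)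
  have hQle := queue_le_of_idle_above hQrec (fun k => by positivity) (fun k => hpmax (α k))
    (fun k => power_nonpos_of_div_lt zero p hp0 hpmin' hpminpos hW
      (mul_le_of_ratio_le zero p φ hp0 hφ0 hφ hW hlam (hopt k))) hc (hQ0 ▸ hc)
  have hsumT : ∀ J, ∑ k ∈ range J, β * (T k : ℝ) = β * (t J - t 0) := fun J => by
    rw [← mul_sum, ← sum_range_sub (fun k => (t k : ℝ))]
    simp [htrec]
  have hframe (J : ℕ) :
      ∑ k ∈ range (J + 1), pslot (t k) ≤ (V * B / pmin + pmax + pmax) + β * t J := by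
    have := sum_range_le_of_queue_step (fun k => (hQrec k).symm ▸ le_max_left _ _) J
    simp only [sum_range_succ, hps1, hsumT, hQ0] at this ⊢
    linarith [hQle J, hpmax (α J), mul_nonneg hβ.le (Nat.cast_nonneg (α := ℝ) (t 0))]
  have hslot : ∀ s, 0 ≤ pslot s := fun s => by
    by_cases hs : ∃ k, s = t k
    · obtain ⟨k, rfl⟩ := hs; exact hps1 k ▸ hp _
    · exact (hps0 s (not_exists.mp hs)).ge
  have ht : StrictMono t := strictMono_nat_of_lt_succ fun k => by have := hT k; rw [htrec]; omega
  exact limsup_avg_le_of_sum_range_le hslot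
    (sum_range_le_of_frame_sums_le ht.injective hslot hps0 (by linarith) hβ.le hframe)

/-- Theorem 1, power-constraint part: Under the single-user
drift-plus-penalty ratio maximizing policy, the sample-path time average power
never exceeds `β`, regardless of the actual values of the frame lengths. -/
theorem stmt3 {A : Type*} [Fintype A] [DecidableEq A] (zero : A)
    (p φ : A → ℝ)
    (hp : ∀ a, 0 ≤ p a) (hp0 : p zero = 0)
    (hφ : ∀ a, 0 ≤ φ a ∧ φ a ≤ 1) (hφ0 : φ zero = 0)
    (V B lam β : ℝ) (hV : 0 ≤ V) (hB : 0 < B) (hlam : 0 < lam) (hβ : 0 < β)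
    (hne : (Finset.univ.filter (fun a : A => a ≠ zero)).Nonempty)
    (pmin : ℝ)
    (hpmin : pmin = (Finset.univ.filter (fun a : A => a ≠ zero)).inf' hne p)
    (hpminpos : 0 < pmin)
    (T : ℕ → ℕ) (hT : ∀ k, 1 ≤ T k)
    (t : ℕ → ℕ) (ht0 : t 0 = 0) (htrec : ∀ k, t (k + 1) = t k + T k)
    (α : ℕ → A) (Q : ℕ → ℝ) (hQ0 : Q 0 = 0)
    (hopt : ∀ k (a : A), (V * B * φ a - Q k * p a) / (1 + φ a / lam) ≤
      (V * B * φ (α k) - Q k * p (α k)) / (1 + φ (α k) / lam))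
    (hQrec : ∀ k, Q (k + 1) = max (Q k + p (α k) - β * (T k : ℝ)) 0)
    (pslot : ℕ → ℝ)
    (hps1 : ∀ k, pslot (t k) = p (α k))
    (hps0 : ∀ s : ℕ, (∀ k, s ≠ t k) → pslot s = 0) :
    limsup (fun T' : ℕ => (1 / (T' : ℝ)) * ∑ s ∈ Finset.range T', pslot s) atTop ≤ β :=
  stmt3_general zero p φ hp hp0 hφ hφ0 V B lam β hV hB hlam hβ hne pmin hpmin hpminpos T hT t htrec
    α Q hQ0 hopt hQrec pslot hps1 hps0
end

section
/- (Key-feature inequality) In the single-user setup, suppose θ : 𝒜 → ℝ is a probability mass function such that B̄·(Σ_α θ(α)φ(α)) / (1 + (Σ_α θ(α)φ(α))/λ) = μ* and (Σ_α θ(α)p(α)) / (1 + (Σ_α θ(α)φ(α))/λ) ≤ β. Then for every Q ≥ 0, any maximizer α̂ over 𝒜 of (V B̄ φ(α) − Q p(α)) / (1 + φ(α)/λ) satisfies (−V B̄ φ(α̂) + Q p(α̂)) / (1 + φ(α̂)/λ) ≤ −V μ* + Q β. -/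
/-!
A maximized ratio dominates every mediant of the ratios, in particular the one weighted by `θ`:
`(V B S - Q P) / (1 + S / λ)` with `S = ∑ θ φ` and `P = ∑ θ p`. That mediant equals
`V μ* - Q P / (1 + S / λ)`, and the power budget bounds the second term by `Q β`.
-/

open Finset

theorem Finset.sum_mul_le_mul_sum_of_div_le {ι K : Type*} [Field K] [LinearOrder K]
    [IsStrictOrderedRing K] (s : Finset ι) {w n d : ι → K} {c : K}
    (hw : ∀ i ∈ s, 0 ≤ w i) (hd : ∀ i ∈ s, 0 < d i) (h : ∀ i ∈ s, n i / d i ≤ c) :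
    ∑ i ∈ s, w i * n i ≤ c * ∑ i ∈ s, w i * d i := by
  rw [mul_sum]
  refine sum_le_sum fun i hi => ?_
  have hn : n i ≤ c * d i := (div_le_iff₀ (hd i hi)).mp (h i hi)
  calc w i * n i ≤ w i * (c * d i) := mul_le_mul_of_nonneg_left hn (hw i hi)
    _ = c * (w i * d i) := by ring

theorem stmt5_general {A : Type*} [Fintype A]
    (p φ : A → ℝ)
    (hφ : ∀ a, 0 ≤ φ a ∧ φ a ≤ 1)
    (V B lam β μstar Q : ℝ)
    (hlam : 0 < lam) (hQ : 0 ≤ Q)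
    (θ : A → ℝ) (hθ : ∀ a, 0 ≤ θ a) (hθsum : ∑ a, θ a = 1)
    (hthru : B * (∑ a, θ a * φ a) / (1 + (∑ a, θ a * φ a) / lam) = μstar)
    (hpow : (∑ a, θ a * p a) / (1 + (∑ a, θ a * φ a) / lam) ≤ β)
    (ahat : A)
    (hmax : ∀ a : A, (V * B * φ a - Q * p a) / (1 + φ a / lam) ≤
      (V * B * φ ahat - Q * p ahat) / (1 + φ ahat / lam)) :
    (-(V * B * φ ahat) + Q * p ahat) / (1 + φ ahat / lam) ≤ -(V * μstar) + Q * β := by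
  set S := ∑ a, θ a * φ a
  set P := ∑ a, θ a * p a
  have hS : 0 < 1 + S / lam := by
    have : 0 ≤ S := sum_nonneg fun a _ => mul_nonneg (hθ a) (hφ a).1
    positivity
  have hmediant : V * B * S - Q * P ≤
      (V * B * φ ahat - Q * p ahat) / (1 + φ ahat / lam) * (1 + S / lam) := by
    have hnum : ∑ a, θ a * (V * B * φ a - Q * p a) = V * B * S - Q * P := by
      simp only [S, P, mul_sum, ← sum_sub_distrib]; exact sum_congr rfl fun a _ => by ring
    have hden : ∑ a, θ a * (1 + φ a / lam) = 1 + S / lam := by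
      simp only [S, mul_add, mul_one, sum_add_distrib, hθsum, sum_div, mul_div_assoc]
    rw [← hnum, ← hden]
    exact sum_mul_le_mul_sum_of_div_le _ (fun a _ => hθ a)
      (fun a _ => by have := (hφ a).1; positivity) (fun a _ => hmax a)
  have hsplit : V * μstar - Q * (P / (1 + S / lam)) = (V * B * S - Q * P) / (1 + S / lam) := by
    rw [← hthru]; field_simp
  have hratio := (div_le_iff₀ hS).mpr hmediant
  have hbudget : Q * (P / (1 + S / lam)) ≤ Q * β := mul_le_mul_of_nonneg_left hpow hQ
  rw [show -(V * B * φ ahat) + Q * p ahat = -(V * B * φ ahat - Q * p ahat) by ring, neg_div]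
  linarith

/-- Key-feature inequality: If an i.i.d. randomized policy `θ` achieves
throughput `μ*` while satisfying the power budget, then any maximizer of the
drift-plus-penalty ratio satisfies the key-feature inequality. -/
theorem stmt5 {A : Type*} [Fintype A] (zero : A)
    (p φ : A → ℝ)
    (hp : ∀ a, 0 ≤ p a) (hp0 : p zero = 0)
    (hφ : ∀ a, 0 ≤ φ a ∧ φ a ≤ 1) (hφ0 : φ zero = 0)
    (V B lam β μstar Q : ℝ)
    (hV : 0 ≤ V) (hB : 0 < B) (hlam : 0 < lam) (hβ : 0 < β) (hQ : 0 ≤ Q)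
    (θ : A → ℝ) (hθ : ∀ a, 0 ≤ θ a) (hθsum : ∑ a, θ a = 1)
    (hthru : B * (∑ a, θ a * φ a) / (1 + (∑ a, θ a * φ a) / lam) = μstar)
    (hpow : (∑ a, θ a * p a) / (1 + (∑ a, θ a * φ a) / lam) ≤ β)
    (ahat : A)
    (hmax : ∀ a : A, (V * B * φ a - Q * p a) / (1 + φ a / lam) ≤
      (V * B * φ ahat - Q * p ahat) / (1 + φ ahat / lam)) :
    (-(V * B * φ ahat) + Q * p ahat) / (1 + φ ahat / lam) ≤ -(V * μstar) + Q * β :=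
  stmt5_general p φ hφ V B lam β μstar Q hlam hQ θ hθ hθsum hthru hpow ahat hmax
end

section
/- (Coupled-arrival induction step) Let F̃^π, F̃^λ ∈ {0,1}^N satisfy Σ_{n=1}^j F̃^π_n ≤ Σ_{n=1}^j F̃^λ_n for all j ∈ {1,…,N}. Let K be the number of zero entries of F̃^λ, and let j^π(l) and j^λ(l) denote the positions of the l-th zero entry (in increasing order) of F̃^π and F̃^λ respectively (so j^π(l) ≤ j^λ(l) for l ≤ K). Let A, A^λ ∈ {0,1}^N be arrival vectors satisfying A_{j^π(l)} ≤ A^λ_{j^λ(l)} for all l ∈ {1,…,K}. Define the post-arrival states F'^π_n = F̃^π_n + (1 − F̃^π_n) A_n and F'^λ_n = F̃^λ_n + (1 − F̃^λ_n) A^λ_n. Then Σ_{n=1}^j F'^π_n ≤ Σ_{n=1}^j F'^λ_n for all j ∈ {1,…,N}. -/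
/-!
Up to slot `j`, a system with occupancy `S` has `j - S` empty buffers, namely its first `j - S`
empty buffers overall, so it gains exactly the arrivals to those. The π system has at least as
many of them as the Max-λ system: on the common first ones the coupling bounds the π arrivals,
and each surplus buffer receives at most one arrival, which the smaller π occupancy offsets.
-/

open Finset

theorem Finset.sum_filter_le_eq_sum_range_getD_sort {α M : Type*} [LinearOrder α]
    [AddCommMonoid M] (s : Finset α) (j d : α) (f : α → M) :
    ∑ a ∈ s with a ≤ j, f a = ∑ i ∈ range #{a ∈ s | a ≤ j}, f ((s.sort (· ≤ ·)).getD i d) := by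
  induction s using Finset.induction_on_min with
  | empty => simp
  | insert a s ha ih =>
    have ha' : a ∉ s := fun h => lt_irrefl a (ha a h)
    rw [sort_insert _ (fun b hb => (ha b hb).le) ha']
    by_cases haj : a ≤ j
    · rw [filter_insert, if_pos haj, sum_insert (by simp [ha']),
        card_insert_of_notMem (by simp [ha']), sum_range_succ', ih]
      simp only [List.getD_cons_succ, List.getD_cons_zero, add_comm]
    · have hempty : {b ∈ insert a s | b ≤ j} = ∅ :=
        filter_eq_empty_iff.mpr fun b hb hbj => by
          rcases mem_insert.mp hb with rfl | hb
          · exact haj hbj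
          · exact haj ((ha b hb).le.trans hbj)
      simp [hempty]

theorem Finset.getD_sort_mem {α : Type*} [LinearOrder α] {s : Finset α} {i : ℕ}
    (hi : i < #s) (d : α) : (s.sort (· ≤ ·)).getD i d ∈ s := by
  rw [← length_sort (· ≤ ·)] at hi
  rw [List.getD_eq_getElem _ _ hi, ← mem_sort (· ≤ ·)]
  exact List.getElem_mem hi

theorem Finset.sum_range_le_sum_range_add_tsub {f g : ℕ → ℕ} {p q : ℕ} (hqp : q ≤ p)
    (hfg : ∀ i < q, f i ≤ g i) (hf : ∀ i ∈ Ico q p, f i ≤ 1) :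
    ∑ i ∈ range p, f i ≤ ∑ i ∈ range q, g i + (p - q) := by
  rw [← sum_range_add_sum_Ico f hqp]
  gcongr with i hi
  · exact hfg i (mem_range.mp hi)
  · simpa using sum_le_card_nsmul _ f 1 hf

section Binary

variable {s : Finset ℕ} {F : ℕ → ℕ}

theorem sum_add_tsub_mul_eq_sum_add_sum_filter (hF : ∀ n ∈ s, F n ≤ 1) (A : ℕ → ℕ) :
    ∑ n ∈ s, (F n + (1 - F n) * A n) = ∑ n ∈ s, F n + ∑ n ∈ s with F n = 0, A n := by
  rw [sum_add_distrib, sum_filter]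
  congr 1
  refine sum_congr rfl fun n hn => ?_
  have := hF n hn
  interval_cases F n <;> simp

theorem sum_add_card_filter_eq_zero (hF : ∀ n ∈ s, F n ≤ 1) :
    ∑ n ∈ s, F n + #{n ∈ s | F n = 0} = #s := by
  rw [card_filter, ← sum_add_distrib, card_eq_sum_ones]
  refine sum_congr rfl fun n hn => ?_
  have := hF n hn
  interval_cases F n <;> simp

end Binary

/-- `((emptyBuffers N F).sort (· ≤ ·)).getD l 0` is the paper's `j(l + 1)`. -/
def emptyBuffers (N : ℕ) (F : ℕ → ℕ) : Finset ℕ := {n ∈ Icc 1 N | F n = 0}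

section EmptyBuffers

variable {N j : ℕ} {F : ℕ → ℕ}

theorem filter_emptyBuffers_le (hjN : j ≤ N) :
    {n ∈ emptyBuffers N F | n ≤ j} = {n ∈ Icc 1 j | F n = 0} := by
  ext n
  simp only [emptyBuffers, mem_filter, mem_Icc]
  constructor
  · rintro ⟨⟨⟨h1, -⟩, hF⟩, hj⟩
    exact ⟨⟨h1, hj⟩, hF⟩
  · rintro ⟨⟨h1, hj⟩, hF⟩
    exact ⟨⟨⟨h1, hj.trans hjN⟩, hF⟩, hj⟩

theorem sum_Icc_add_card_filter_le_emptyBuffers (hF : ∀ n ∈ Icc 1 N, F n ≤ 1) (hjN : j ≤ N) :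
    ∑ n ∈ Icc 1 j, F n + #{n ∈ emptyBuffers N F | n ≤ j} = j := by
  rw [filter_emptyBuffers_le hjN,
    sum_add_card_filter_eq_zero fun n hn => hF n (Icc_subset_Icc_right hjN hn), Nat.card_Icc,
    Nat.add_sub_cancel]

theorem sum_Icc_post_arrival_eq (hF : ∀ n ∈ Icc 1 N, F n ≤ 1) (hjN : j ≤ N) (A : ℕ → ℕ) :
    ∑ n ∈ Icc 1 j, (F n + (1 - F n) * A n) = ∑ n ∈ Icc 1 j, F n +
      ∑ i ∈ range #{n ∈ emptyBuffers N F | n ≤ j},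
        A (((emptyBuffers N F).sort (· ≤ ·)).getD i 0) := by
  rw [sum_add_tsub_mul_eq_sum_add_sum_filter (fun n hn => hF n (Icc_subset_Icc_right hjN hn)),
    ← filter_emptyBuffers_le hjN, sum_filter_le_eq_sum_range_getD_sort]

end EmptyBuffers

theorem stmt12_general (N : ℕ) (Fpi Fml Api Aml : ℕ → ℕ)
    (hFpibin : ∀ n ∈ Finset.Icc 1 N, Fpi n ≤ 1)
    (hFmlbin : ∀ n ∈ Finset.Icc 1 N, Fml n ≤ 1)
    (hApibin : ∀ n ∈ Finset.Icc 1 N, Api n ≤ 1)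
    (hdom : ∀ j ∈ Finset.Icc 1 N,
      ∑ n ∈ Finset.Icc 1 j, Fpi n ≤ ∑ n ∈ Finset.Icc 1 j, Fml n)
    (hcouple : ∀ l < ((Finset.Icc 1 N).filter (fun n => Fml n = 0)).card,
      Api ((((Finset.Icc 1 N).filter (fun n => Fpi n = 0)).sort (· ≤ ·)).getD l 0) ≤
      Aml ((((Finset.Icc 1 N).filter (fun n => Fml n = 0)).sort (· ≤ ·)).getD l 0)) :
    ∀ j ∈ Finset.Icc 1 N,
      ∑ n ∈ Finset.Icc 1 j, (Fpi n + (1 - Fpi n) * Api n) ≤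
      ∑ n ∈ Finset.Icc 1 j, (Fml n + (1 - Fml n) * Aml n) := by
  intro j hj
  have hjN := (mem_Icc.mp hj).2
  rw [sum_Icc_post_arrival_eq hFpibin hjN, sum_Icc_post_arrival_eq hFmlbin hjN]
  have hcountpi := sum_Icc_add_card_filter_le_emptyBuffers hFpibin hjN
  have hcountml := sum_Icc_add_card_filter_le_emptyBuffers hFmlbin hjN
  have hdomj := hdom j hj
  have hpiK := card_filter_le (emptyBuffers N Fpi) (· ≤ j)
  have hmlK := card_filter_le (emptyBuffers N Fml) (· ≤ j)
  have harrivals := sum_range_le_sum_range_add_tsub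
    (f := fun i => Api (((emptyBuffers N Fpi).sort (· ≤ ·)).getD i 0))
    (g := fun i => Aml (((emptyBuffers N Fml).sort (· ≤ ·)).getD i 0))
    (p := #{n ∈ emptyBuffers N Fpi | n ≤ j}) (q := #{n ∈ emptyBuffers N Fml | n ≤ j})
    (by omega) (fun i hi => hcouple i (show i < #(emptyBuffers N Fml) by omega))
    (fun i hi => hApibin _ (mem_filter.mp
      (getD_sort_mem (s := emptyBuffers N Fpi) (by simp at hi; omega) 0)).1)
  omega

/-- Coupled-arrival induction step: If post-service buffer states
`Fpi` (policy π) are prefix-dominated by `Fml` (Max-λ), and the arrival vectors `Api`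
and `Aml` are coupled so that an arrival to the `l`-th empty buffer of the π system
implies an arrival to the `l`-th empty buffer of the Max-λ system (for `l` up to the
number `K` of empty buffers of the Max-λ system), then the post-arrival states
(arrivals accepted only into empty buffers) still satisfy prefix domination. -/
theorem stmt12 (N : ℕ) (Fpi Fml Api Aml : ℕ → ℕ)
    (hFpibin : ∀ n ∈ Finset.Icc 1 N, Fpi n ≤ 1)
    (hFmlbin : ∀ n ∈ Finset.Icc 1 N, Fml n ≤ 1)
    (hApibin : ∀ n ∈ Finset.Icc 1 N, Api n ≤ 1)
    (hAmlbin : ∀ n ∈ Finset.Icc 1 N, Aml n ≤ 1)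
    (hdom : ∀ j ∈ Finset.Icc 1 N,
      ∑ n ∈ Finset.Icc 1 j, Fpi n ≤ ∑ n ∈ Finset.Icc 1 j, Fml n)
    (hcouple : ∀ l < ((Finset.Icc 1 N).filter (fun n => Fml n = 0)).card,
      Api ((((Finset.Icc 1 N).filter (fun n => Fpi n = 0)).sort (· ≤ ·)).getD l 0) ≤
      Aml ((((Finset.Icc 1 N).filter (fun n => Fml n = 0)).sort (· ≤ ·)).getD l 0)) :
    ∀ j ∈ Finset.Icc 1 N,
      ∑ n ∈ Finset.Icc 1 j, (Fpi n + (1 - Fpi n) * Api n) ≤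
      ∑ n ∈ Finset.Icc 1 j, (Fml n + (1 - Fml n) * Aml n) :=
  stmt12_general N Fpi Fml Api Aml hFpibin hFmlbin hApibin hdom hcouple
end

section
/- (Lemma, stochastic ordering of total packet processes) Consider N single-buffer queues with M servers (M < N), indexed so that λ_1 ≤ … ≤ λ_N with 0 < λ_n < 1, a fixed initial buffer state F(0) ∈ {0,1}^N, and arrivals A_n(t) that are independent Bernoulli(λ_n) across queues and i.i.d. over slots. Let π be any work-conserving policy: at each slot t it selects, as a function of the history F(0),…,F(t) and without knowledge of A(t), a service vector s(t) ∈ {0,1}^N with s_n(t) ≤ F_n(t) and Σ_n s_n(t) = min(M, Σ_n F_n(t)); buffers evolve as F_n(t+1) = (F_n(t) − s_n(t)) + (1 − F_n(t) + s_n(t)) A_n(t). Let Max-λ be the policy serving the min(M, Σ_n F_n(t)) nonempty queues with the largest indices. With U^π(t) = Σ_n F^π_n(t) and U^{Max-λ}(t) = Σ_n F^{Max-λ}_n(t) (both started from the same F(0)), the process U^π is stochastically less than or equal to U^{Max-λ}: for every t ≥ 0, every z ∈ ℝ, and every function g : ℝ^{t+1} → ℝ that is measurable and nondecreasing in each coordinate,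 P[g(U^π(0),…,U^π(t)) > z] ≤ P[g(U^{Max-λ}(0),…,U^{Max-λ}(t)) > z]. -/
open MeasureTheory ProbabilityTheory Finset

/-- Buffer dynamics of the `N` single-buffer queue system: a packet in buffer `n`
remains if present and not served, and an end-of-slot arrival is accepted iff the
buffer is empty after service: `F_n(t+1) = (F_n(t) − s_n(t)) + (1 − F_n(t) + s_n(t))A_n(t)`. -/
def nextState {N : ℕ} (F s a : Fin N → Bool) : Fin N → Bool :=
  fun n => (F n && !(s n)) || a n

/-- The history of buffer states `[F(t), F(t-1), …, F(0)]` (most recent first) produced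
by a policy `pol` (a function of the history of buffer states, without knowledge of the
current slot's arrivals) and arrival sequence `a`, from initial state `F0`. -/
def histories {N : ℕ} (F0 : Fin N → Bool)
    (pol : List (Fin N → Bool) → (Fin N → Bool))
    (a : ℕ → Fin N → Bool) : ℕ → List (Fin N → Bool)
  | 0 => [F0]
  | t + 1 =>
      nextState (histories F0 pol a t).headI (pol (histories F0 pol a t)) (a t)
        :: histories F0 pol a t

/-- The buffer state `F(t)`. -/
def stateAt {N : ℕ} (F0 : Fin N → Bool)
    (pol : List (Fin N → Bool) → (Fin N → Bool))
    (a : ℕ → Fin N → Bool) (t : ℕ) : Fin N → Bool :=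
  (histories F0 pol a t).headI

/-- Total number of packets present in buffer state `F`. -/
def packetCount {N : ℕ} (F : Fin N → Bool) : ℕ :=
  ∑ n, if F n then 1 else 0

/-- A policy is feasible and work-conserving with `M` servers: it serves only nonempty
buffers (of the most recent state in the history) and serves exactly
`min(M, number of nonempty buffers)` of them. -/
def WorkConserving {N : ℕ} (M : ℕ)
    (pol : List (Fin N → Bool) → (Fin N → Bool)) : Prop :=
  ∀ h : List (Fin N → Bool),
    (∀ n, pol h n = true → h.headI n = true) ∧
    packetCount (pol h) = min M (packetCount h.headI)

/-- The Max-λ policy: serve the `min(M, number of nonempty buffers)` nonempty queues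
with the largest indices (queues are indexed with `λ_1 ≤ … ≤ λ_N`). -/
def maxLambdaPol {N : ℕ} (M : ℕ) : List (Fin N → Bool) → (Fin N → Bool) :=
  fun h n => h.headI n &&
    decide ((Finset.univ.filter (fun m : Fin N => n < m ∧ h.headI m = true)).card < M)

/-!
Order buffer states by `PrefixLE F G`: for every `k`, `G` holds at least as many packets as `F`
among the `k` queues of smallest arrival rate. Serving the highest-rate queues, Max-λ leaves a
post-service state that dominates the one left by any work-conserving policy from a dominated
state. Dominance is generated by adding a packet and by shifting a packet down to an empty
lower-rate queue, and averaging over the next arrivals preserves monotonicity under both moves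
(for a shift, resample the arrivals at the two queues involved and use `λ_i ≤ λ_j`). Backward
induction then shows that every monotone functional of the count trajectory has a larger
expectation under Max-λ; the probability of `{g > z}` is such an expectation, a finite sum over
the arrival patterns of the first `t` slots.
-/

namespace SingleBuffer

variable {N : ℕ}

def countBelow (F : Fin N → Bool) (k : ℕ) : ℕ :=
  #(univ.filter fun n : Fin N => (n : ℕ) < k ∧ F n = true)

lemma packetCount_eq_card (F : Fin N → Bool) :
    packetCount F = #(univ.filter fun n => F n = true) :=
  (card_filter _ _).symm

lemma countBelow_of_le (F : Fin N → Bool) {k : ℕ} (hk : N ≤ k) :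
    countBelow F k = packetCount F := by
  rw [countBelow, packetCount_eq_card]
  congr 1
  ext n
  simp [lt_of_lt_of_le n.isLt hk]

lemma countBelow_mono (F : Fin N → Bool) : Monotone (countBelow F) :=
  fun _ _ hkl => card_le_card fun n hn => by
    simp only [mem_filter] at hn ⊢
    exact ⟨hn.1, hn.2.1.trans_le hkl, hn.2.2⟩

lemma countBelow_le_packetCount (F : Fin N → Bool) (k : ℕ) : countBelow F k ≤ packetCount F := by
  rw [← countBelow_of_le F (le_max_right k N)]
  exact countBelow_mono F (le_max_left k N)

lemma countBelow_le_of_le {F G : Fin N → Bool} (h : F ≤ G) (k : ℕ) :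
    countBelow F k ≤ countBelow G k :=
  card_le_card fun n hn => by
    simp only [mem_filter] at hn ⊢
    exact ⟨hn.1, hn.2.1, Bool.le_iff_imp.mp (h n) hn.2.2⟩

lemma countBelow_succ (F : Fin N → Bool) (n : Fin N) :
    countBelow F (n + 1) = countBelow F n + if F n then 1 else 0 := by
  simp only [countBelow, card_filter]
  rw [← Fintype.sum_ite_eq' n fun m => if F m then 1 else 0, ← sum_add_distrib]
  refine sum_congr rfl fun m _ => ?_
  rcases lt_trichotomy (m : ℕ) n with h | h | h
  · simp [h, h.trans (Nat.lt_succ_self _), Fin.ne_of_lt h]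
  · cases Fin.ext h; simp
  · simp [(Fin.ne_of_lt h).symm, not_lt.mpr h.le, show ¬ (m : ℕ) < n + 1 by omega]

lemma countBelow_update (F : Fin N → Bool) (m : Fin N) (b : Bool) (k : ℕ) :
    countBelow (Function.update F m b) k + (if (m : ℕ) < k ∧ F m = true then 1 else 0) =
      countBelow F k + if (m : ℕ) < k ∧ b = true then 1 else 0 := by
  simp only [countBelow, card_filter]
  rw [← add_sum_erase _ _ (mem_univ m), ← add_sum_erase _ _ (mem_univ m),
    sum_congr rfl fun n hn => by rw [Function.update_of_ne (ne_of_mem_erase hn)]]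
  simp only [Function.update_self]
  ring

lemma countBelow_eq_of_forall_false {F : Fin N → Bool} {a b : ℕ} (hab : a ≤ b)
    (h : ∀ n : Fin N, a ≤ n → (n : ℕ) < b → F n = false) : countBelow F b = countBelow F a := by
  unfold countBelow
  congr 1
  ext n
  simp only [mem_filter, mem_univ, true_and]
  refine ⟨fun hn => ⟨?_, hn.2⟩, fun hn => ⟨hn.1.trans_le hab, hn.2⟩⟩
  by_contra han
  simp [h n (not_lt.mp han) hn.1] at hn

lemma eq_of_countBelow_eq {F G : Fin N → Bool} (h : ∀ k ≤ N, countBelow F k = countBelow G k) :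
    F = G := by
  funext n
  have hsucc := h (n + 1) n.isLt
  rw [countBelow_succ, countBelow_succ, h n n.isLt.le] at hsucc
  cases hF : F n <;> cases hG : G n <;> simp_all

lemma packetCount_sdiff_add {G s : Fin N → Bool} (hs : s ≤ G) :
    packetCount (G \ s) + packetCount s = packetCount G := by
  simp only [packetCount, ← sum_add_distrib]
  refine sum_congr rfl fun n _ => ?_
  have := Bool.le_iff_imp.mp (hs n)
  cases hG : G n <;> cases hsn : s n <;> simp_all [show (G \ s) n = (G n && !s n) from rfl]

def PrefixLE (F G : Fin N → Bool) : Prop := ∀ k, countBelow F k ≤ countBelow G k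

lemma PrefixLE.refl (F : Fin N → Bool) : PrefixLE F F := fun _ => le_rfl

lemma PrefixLE.of_le {F G : Fin N → Bool} (h : F ≤ G) : PrefixLE F G := countBelow_le_of_le h

lemma PrefixLE.packetCount_le {F G : Fin N → Bool} (h : PrefixLE F G) :
    packetCount F ≤ packetCount G := by
  simpa only [countBelow_of_le _ le_rfl] using h N

def maxLambdaResidual (M : ℕ) (F : Fin N → Bool) : Fin N → Bool :=
  fun n => F n && decide (M ≤ #(univ.filter fun m => n < m ∧ F m = true))

lemma card_above_add_countBelow_succ (F : Fin N → Bool) (n : Fin N) :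
    #(univ.filter fun m => n < m ∧ F m = true) + countBelow F (n + 1) = packetCount F := by
  rw [packetCount_eq_card, ← card_filter_add_card_filter_not (s := univ.filter fun m => F m = true)
    (fun m => n < m), filter_filter, filter_filter, countBelow]
  congr 1 <;> congr 1 <;> ext m <;> simp [← Fin.val_fin_lt, and_comm]

lemma countBelow_maxLambdaResidual (M : ℕ) (F : Fin N → Bool) (k : ℕ) :
    countBelow (maxLambdaResidual M F) k = min (countBelow F k) (packetCount F - M) := by
  induction k with
  | zero => simp [countBelow]
  | succ k ih =>
    rcases lt_or_ge k N with hk | hk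
    · obtain ⟨n, rfl⟩ : ∃ n : Fin N, (n : ℕ) = k := ⟨⟨k, hk⟩, rfl⟩
      have hpart := card_above_add_countBelow_succ F n
      have hle := countBelow_le_packetCount F (n + 1)
      rw [countBelow_succ] at hpart hle
      rw [countBelow_succ, countBelow_succ, ih]
      cases hF : F n <;>
        simp only [maxLambdaResidual, hF, Bool.false_and, Bool.true_and, Bool.false_eq_true,
          decide_eq_true_eq, ↓reduceIte] at hpart hle ⊢ <;>
        (try split_ifs) <;> omega
    · rw [countBelow_of_le _ (by omega), ← countBelow_of_le _ hk, ih, countBelow_of_le F hk,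
        countBelow_of_le F (by omega)]

lemma maxLambdaResidual_mono (M : ℕ) {F G : Fin N → Bool} (h : PrefixLE F G) :
    PrefixLE (maxLambdaResidual M F) (maxLambdaResidual M G) := fun k => by
  rw [countBelow_maxLambdaResidual, countBelow_maxLambdaResidual]
  exact min_le_min (h k) (Nat.sub_le_sub_right h.packetCount_le M)

lemma PrefixLE.sdiff_prefixLE_maxLambdaResidual {G F s : Fin N → Bool} (hGF : PrefixLE G F)
    (hs : s ≤ G) {M : ℕ} (hcount : packetCount s = min M (packetCount G)) :
    PrefixLE (G \ s) (maxLambdaResidual M F) := fun k => by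
  rw [countBelow_maxLambdaResidual]
  have hsplit := packetCount_sdiff_add hs
  have hR := countBelow_le_packetCount (G \ s) k
  have hGF' := hGF.packetCount_le
  exact le_min ((countBelow_le_of_le sdiff_le k).trans (hGF k)) (by omega)

inductive ElementaryMove (F : Fin N → Bool) : (Fin N → Bool) → Prop
  | add {m : Fin N} : F m = false → ElementaryMove F (Function.update F m true)
  | shift {i j : Fin N} : i < j → F i = false → F j = true →
      ElementaryMove F (Function.update (Function.update F j false) i true)

lemma countBelow_shift {F : Fin N → Bool} {i j : Fin N} (hij : i < j) (hi : F i = false)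
    (hj : F j = true) (k : ℕ) :
    countBelow (Function.update (Function.update F j false) i true) k +
        (if (j : ℕ) < k then 1 else 0) = countBelow F k + if (i : ℕ) < k then 1 else 0 := by
  have hupd_j := countBelow_update F j false k
  have hupd_i := countBelow_update (Function.update F j false) i true k
  rw [Function.update_of_ne hij.ne, hi] at hupd_i
  simp only [hj, and_true, Bool.false_eq_true, and_false, ↓reduceIte, add_zero] at hupd_i hupd_j
  omega

lemma ElementaryMove.prefixLE {F F' : Fin N → Bool} (h : ElementaryMove F F') : PrefixLE F F' := by
  cases h with
  | add _ => exact PrefixLE.of_le (le_update_iff.mpr ⟨Bool.le_true _, fun _ _ => le_rfl⟩)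
  | @shift i j hij hi hj =>
    intro k
    have hcount := countBelow_shift hij hi hj k
    have : (i : ℕ) < j := hij
    split_ifs at hcount <;> omega

lemma ElementaryMove.ne {F F' : Fin N → Bool} (h : ElementaryMove F F') : F ≠ F' := by
  cases h with
  | @add m hm => exact fun h => by simpa [hm] using congrFun h m
  | @shift i _ _ hi _ => exact fun h => by simpa [hi] using congrFun h i

lemma sum_countBelow_lt {F G : Fin N → Bool} (h : PrefixLE F G) (hne : F ≠ G) :
    ∑ k ∈ range (N + 1), countBelow F k < ∑ k ∈ range (N + 1), countBelow G k := by
  obtain ⟨k, hk, hlt⟩ : ∃ k ≤ N, countBelow F k < countBelow G k := by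
    by_contra! hc
    exact hne (eq_of_countBelow_eq fun k hk => (h k).antisymm (hc k hk))
  exact sum_lt_sum (fun k _ => h k) ⟨k, mem_range.2 (Nat.lt_succ_of_le hk), hlt⟩

lemma PrefixLE.exists_countBelow_lt_of_ne {B L : Fin N → Bool} (hBL : PrefixLE B L) (hne : B ≠ L) :
    ∃ i : Fin N, B i = false ∧ ∀ k : ℕ, (i : ℕ) < k →
      (∀ n : Fin N, i ≤ n → (n : ℕ) < k → B n = false) → countBelow B k < countBelow L k := by
  obtain ⟨i, hi, hmin⟩ := WellFounded.has_min wellFounded_lt {n | B n ≠ L n}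
    (Function.ne_iff.mp hne)
  have hagree : countBelow B i = countBelow L i := by
    unfold countBelow
    congr 1
    ext n
    simp only [mem_filter, mem_univ, true_and]
    exact and_congr_right fun hn => by rw [not_not.mp fun h => hmin n h hn]
  have hsucc := hBL (i + 1)
  rw [countBelow_succ, countBelow_succ, hagree] at hsucc
  obtain ⟨hBi, hLi⟩ : B i = false ∧ L i = true := by
    cases hB : B i <;> cases hL : L i <;> simp_all
  refine ⟨i, hBi, fun k hik hB => ?_⟩
  have hL := countBelow_succ L i
  rw [hLi, if_pos rfl] at hL
  rw [countBelow_eq_of_forall_false hik.le hB, hagree, Nat.lt_iff_add_one_le, ← hL]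
  exact countBelow_mono L hik

/-- Fill the first slot where `B` and `L` differ, with the nearest packet of `B` above it if
there is one and with a new packet otherwise. -/
lemma exists_elementaryMove_prefixLE {B L : Fin N → Bool} (hBL : PrefixLE B L) (hne : B ≠ L) :
    ∃ B', ElementaryMove B B' ∧ PrefixLE B' L := by
  obtain ⟨i, hBi, hgap⟩ := hBL.exists_countBelow_lt_of_ne hne
  by_cases hj : ∃ j, i < j ∧ B j = true
  · obtain ⟨j, ⟨hij, hBj⟩, hjmin⟩ := WellFounded.has_min wellFounded_lt {j | i < j ∧ B j = true} hj
    have hBgap : ∀ n : Fin N, i ≤ n → n < j → B n = false := fun n hin hnj => by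
      rcases hin.lt_or_eq with hin | rfl
      · exact Bool.eq_false_iff.mpr fun hBn => hjmin n ⟨hin, hBn⟩ hnj
      · exact hBi
    refine ⟨_, .shift hij hBi hBj, fun k => ?_⟩
    have hcount := countBelow_shift hij hBi hBj k
    have hij' : (i : ℕ) < j := hij
    have := hBL k
    rcases le_or_gt k i with hki | hik
    · split_ifs at hcount <;> omega
    rcases le_or_gt k j with hkj | hjk
    · have := hgap k hik fun n hin hnk => hBgap n hin (Fin.lt_def.mpr (by omega))
      split_ifs at hcount <;> omega
    · split_ifs at hcount <;> omega
  · push Not at hj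
    refine ⟨_, .add hBi, fun k => ?_⟩
    have hcount := countBelow_update B i true k
    rw [hBi] at hcount
    simp only [Bool.false_eq_true, and_false, ↓reduceIte, and_true] at hcount
    rcases le_or_gt k i with hki | hik
    · have := hBL k
      split_ifs at hcount <;> omega
    · have := hgap k hik fun n hin _ => by
        rcases hin.lt_or_eq with hin | rfl
        · exact Bool.eq_false_iff.mpr (hj n hin)
        · exact hBi
      rw [if_pos hik] at hcount
      omega

lemma PrefixLE.reflTransGen_elementaryMove {B L : Fin N → Bool} (h : PrefixLE B L) :
    Relation.ReflTransGen ElementaryMove B L := by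
  induction hd : ∑ k ∈ range (N + 1), countBelow L k - ∑ k ∈ range (N + 1), countBelow B k
    using Nat.strong_induction_on generalizing B with
  | _ d ih =>
    by_cases hBL : B = L
    · exact hBL ▸ .refl
    obtain ⟨B', hmove, hB'L⟩ := exists_elementaryMove_prefixLE h hBL
    have hlt := sum_countBelow_lt hmove.prefixLE hmove.ne
    have hle := sum_le_sum fun k (_ : k ∈ range (N + 1)) => hB'L k
    exact .head hmove (ih _ (by omega) hB'L rfl)

def bernoulliWeight (p : ℝ) (b : Bool) : ℝ := if b then p else 1 - p

def arrivalWeight (lam : Fin N → ℝ) (α : Fin N → Bool) : ℝ := ∏ n, bernoulliWeight (lam n) (α n)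

lemma bernoulliWeight_nonneg {p : ℝ} (hp : 0 ≤ p ∧ p ≤ 1) (b : Bool) : 0 ≤ bernoulliWeight p b := by
  unfold bernoulliWeight
  split_ifs <;> linarith

lemma arrivalWeight_nonneg {lam : Fin N → ℝ} (hlam : ∀ n, 0 ≤ lam n ∧ lam n ≤ 1)
    (α : Fin N → Bool) : 0 ≤ arrivalWeight lam α :=
  prod_nonneg fun n _ => bernoulliWeight_nonneg (hlam n) (α n)

lemma sum_arrivalWeight_mul_eq_sum_update (lam : Fin N → ℝ) (i : Fin N)
    (f : (Fin N → Bool) → ℝ) :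
    ∑ α, arrivalWeight lam α * f α =
      ∑ α, arrivalWeight lam α * ∑ b, bernoulliWeight (lam i) b * f (Function.update α i b) := by
  let e := Equiv.funSplitAt i Bool
  have hweight : ∀ p, arrivalWeight lam (e.symm p) =
      bernoulliWeight (lam i) p.1 * ∏ j : {j // j ≠ i}, bernoulliWeight (lam j) (p.2 j) := by
    rintro ⟨b, r⟩
    rw [arrivalWeight, Fintype.prod_eq_mul_prod_subtype_ne _ i]
    congr 1
    · simp [e]
    · exact prod_congr rfl fun j _ => by simp [e, j.2]
  have hupdate : ∀ p c, Function.update (e.symm p) i c = e.symm (c, p.2) := by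
    rintro ⟨b, r⟩ c
    funext j
    by_cases hj : j = i
    · subst hj; simp [e]
    · simp [e, hj]
  simp only [← e.symm.sum_comp, hweight, hupdate, Fintype.sum_prod_type, Fintype.sum_bool,
    ← sum_add_distrib]
  refine sum_congr rfl fun r _ => ?_
  simp only [bernoulliWeight, if_true, Bool.false_eq_true, if_false]
  ring

def arrivalAvg (lam : Fin N → ℝ) (V : (Fin N → Bool) → ℝ) (B : Fin N → Bool) : ℝ :=
  ∑ α, arrivalWeight lam α * V (B ⊔ α)

section arrivalAvg

variable {lam : Fin N → ℝ}

lemma arrivalAvg_le_arrivalAvg (hlam : ∀ n, 0 ≤ lam n ∧ lam n ≤ 1) {V W : (Fin N → Bool) → ℝ}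
    {B B' : Fin N → Bool} (h : ∀ α, V (B ⊔ α) ≤ W (B' ⊔ α)) :
    arrivalAvg lam V B ≤ arrivalAvg lam W B' :=
  sum_le_sum fun α _ => mul_le_mul_of_nonneg_left (h α) (arrivalWeight_nonneg hlam α)

lemma arrivalAvg_le_shift (hlam : ∀ n, 0 ≤ lam n ∧ lam n ≤ 1) {V : (Fin N → Bool) → ℝ}
    (hV : ∀ ⦃X Y⦄, PrefixLE X Y → V X ≤ V Y) {B : Fin N → Bool} {i j : Fin N} (hij : i < j)
    (hlamij : lam i ≤ lam j) (hi : B i = false) (hj : B j = true) :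
    arrivalAvg lam V B ≤ arrivalAvg lam V (Function.update (Function.update B j false) i true) := by
  have hresample : ∀ B' : Fin N → Bool, arrivalAvg lam V B' = ∑ α, arrivalWeight lam α *
      ∑ c, bernoulliWeight (lam j) c * ∑ b, bernoulliWeight (lam i) b *
        V (B' ⊔ Function.update (Function.update α j c) i b) := fun B' => by
    rw [arrivalAvg, sum_arrivalWeight_mul_eq_sum_update lam i]
    exact sum_arrivalWeight_mul_eq_sum_update lam j _
  rw [hresample, hresample]
  refine sum_le_sum fun α _ => mul_le_mul_of_nonneg_left ?_ (arrivalWeight_nonneg hlam α)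
  -- The left side averages `V (T b true)` and the right side `V (T true c)`; conclude from
  -- `V (T false true) ≤ V (T true false) ≤ V (T true true)` and `lam i ≤ lam j`.
  set T : Bool → Bool → Fin N → Bool := fun b c =>
    Function.update (Function.update (B ⊔ α) j c) i b with hT
  have hB : ∀ b c, B ⊔ Function.update (Function.update α j c) i b = T b true := by
    intro b c
    funext n
    simp only [hT, Function.update_apply, Pi.sup_apply]
    split_ifs <;> simp_all
  have hB' : ∀ b c, Function.update (Function.update B j false) i true ⊔
      Function.update (Function.update α j c) i b = T true c := by
    intro b c
    funext n
    simp only [hT, Function.update_apply, Pi.sup_apply]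
    split_ifs <;> simp_all
  have hshift : T true false = Function.update (Function.update (T false true) j false) i true := by
    simp only [hT, Function.update_idem, Function.update_comm hij.ne]
  have hVft : V (T false true) ≤ V (T true false) := hV <| hshift ▸
    (ElementaryMove.shift hij (by simp [hT]) (by simp [hT, hij.ne'])).prefixLE
  have hVtf : V (T true false) ≤ V (T true true) := hV <| PrefixLE.of_le fun n => by
    simp only [hT, Function.update_apply]
    split_ifs <;> simp
  simp only [hB, hB', Fintype.sum_bool, bernoulliWeight, if_true, Bool.false_eq_true, if_false]
  nlinarith [mul_nonneg (sub_nonneg.mpr hlamij) (sub_nonneg.mpr (hVft.trans hVtf)),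
    mul_nonneg (sub_nonneg.mpr (hlam j).2) (sub_nonneg.mpr hVft)]

lemma arrivalAvg_le_of_elementaryMove (hlam : ∀ n, 0 ≤ lam n ∧ lam n ≤ 1) (hmono : Monotone lam)
    {V : (Fin N → Bool) → ℝ} (hV : ∀ ⦃X Y⦄, PrefixLE X Y → V X ≤ V Y) {B B' : Fin N → Bool}
    (h : ElementaryMove B B') : arrivalAvg lam V B ≤ arrivalAvg lam V B' := by
  cases h with
  | add _ =>
    exact arrivalAvg_le_arrivalAvg hlam fun α => hV <| PrefixLE.of_le <|
      sup_le_sup_right (le_update_iff.mpr ⟨Bool.le_true _, fun _ _ => le_rfl⟩) α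
  | shift hij hi hj => exact arrivalAvg_le_shift hlam hV hij (hmono hij.le) hi hj

lemma arrivalAvg_mono (hlam : ∀ n, 0 ≤ lam n ∧ lam n ≤ 1) (hmono : Monotone lam)
    {V : (Fin N → Bool) → ℝ} (hV : ∀ ⦃X Y⦄, PrefixLE X Y → V X ≤ V Y) {B L : Fin N → Bool}
    (h : PrefixLE B L) : arrivalAvg lam V B ≤ arrivalAvg lam V L := by
  have hchain := h.reflTransGen_elementaryMove
  clear h
  induction hchain with
  | refl => exact le_rfl
  | tail _ hmove ih => exact ih.trans (arrivalAvg_le_of_elementaryMove hlam hmono hV hmove)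

end arrivalAvg

def maxLambdaValue (M : ℕ) (lam : Fin N → ℝ) :
    (t : ℕ) → ((Fin (t + 1) → ℕ) → ℝ) → (Fin N → Bool) → ℝ
  | 0, φ, F => φ fun _ => packetCount F
  | t + 1, φ, F => arrivalAvg lam (maxLambdaValue M lam t fun u => φ (Fin.cons (packetCount F) u))
      (maxLambdaResidual M F)

lemma maxLambdaValue_le {M : ℕ} {lam : Fin N → ℝ} (hlam : ∀ n, 0 ≤ lam n ∧ lam n ≤ 1)
    (hmono : Monotone lam) :
    ∀ (t : ℕ) {φ ψ : (Fin (t + 1) → ℕ) → ℝ} {F G : Fin N → Bool}, Monotone ψ → φ ≤ ψ →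
      PrefixLE F G → maxLambdaValue M lam t φ F ≤ maxLambdaValue M lam t ψ G
  | 0, _, _, _, _, hψ, hφψ, hFG => (hφψ _).trans (hψ fun _ => hFG.packetCount_le)
  | t + 1, φ, ψ, F, G, hψ, hφψ, hFG => by
    have hψG : Monotone fun u => ψ (Fin.cons (packetCount G) u) :=
      fun u v huv => hψ (Fin.cons_le_cons.mpr ⟨le_rfl, huv⟩)
    calc maxLambdaValue M lam (t + 1) φ F
        ≤ arrivalAvg lam (maxLambdaValue M lam t fun u => ψ (Fin.cons (packetCount G) u))
            (maxLambdaResidual M F) :=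
          arrivalAvg_le_arrivalAvg hlam fun _ => maxLambdaValue_le hlam hmono t hψG
            (fun u => (hφψ _).trans (hψ (Fin.cons_le_cons.mpr ⟨hFG.packetCount_le, le_rfl⟩)))
            (PrefixLE.refl _)
      _ ≤ maxLambdaValue M lam (t + 1) ψ G :=
          arrivalAvg_mono hlam hmono (fun _ _ hXY => maxLambdaValue_le hlam hmono t hψG le_rfl hXY)
            (maxLambdaResidual_mono M hFG)

/-- Expectation of `φ` on the next `t + 1` packet counts under `pol` from history `h`;
`nextState F s α` is `F \ s ⊔ α` by definition. -/
def policyValue (lam : Fin N → ℝ) (pol : List (Fin N → Bool) → Fin N → Bool) :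
    (t : ℕ) → ((Fin (t + 1) → ℕ) → ℝ) → List (Fin N → Bool) → ℝ
  | 0, φ, h => φ fun _ => packetCount h.headI
  | t + 1, φ, h => arrivalAvg lam
      (fun X => policyValue lam pol t (fun u => φ (Fin.cons (packetCount h.headI) u)) (X :: h))
      (h.headI \ pol h)

lemma policyValue_le_maxLambdaValue {M : ℕ} {lam : Fin N → ℝ}
    (hlam : ∀ n, 0 ≤ lam n ∧ lam n ≤ 1) (hmono : Monotone lam)
    {pol : List (Fin N → Bool) → Fin N → Bool} (hwc : WorkConserving M pol) :
    ∀ (t : ℕ) {φ : (Fin (t + 1) → ℕ) → ℝ} {h : List (Fin N → Bool)} {F : Fin N → Bool},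
      Monotone φ → PrefixLE h.headI F → policyValue lam pol t φ h ≤ maxLambdaValue M lam t φ F
  | 0, _, _, _, hφ, hF => hφ fun _ => hF.packetCount_le
  | t + 1, φ, h, F, hφ, hF => by
    have hφ' : ∀ c, Monotone fun u => φ (Fin.cons c u) :=
      fun c u v huv => hφ (Fin.cons_le_cons.mpr ⟨le_rfl, huv⟩)
    calc policyValue lam pol (t + 1) φ h
        ≤ arrivalAvg lam (maxLambdaValue M lam t fun u => φ (Fin.cons (packetCount h.headI) u))
            (h.headI \ pol h) :=
          arrivalAvg_le_arrivalAvg hlam fun _ =>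
            policyValue_le_maxLambdaValue hlam hmono hwc t (hφ' _) (PrefixLE.refl _)
      _ ≤ arrivalAvg lam (maxLambdaValue M lam t fun u => φ (Fin.cons (packetCount h.headI) u))
            (maxLambdaResidual M F) :=
          arrivalAvg_mono hlam hmono
            (fun _ _ hXY => maxLambdaValue_le hlam hmono t (hφ' _) le_rfl hXY)
            (hF.sdiff_prefixLE_maxLambdaResidual
              (fun n => Bool.le_iff_imp.mpr ((hwc h).1 n)) (hwc h).2)
      _ ≤ maxLambdaValue M lam (t + 1) φ F :=
          arrivalAvg_le_arrivalAvg hlam fun _ => maxLambdaValue_le hlam hmono t (hφ' _)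
            (fun u => hφ (Fin.cons_le_cons.mpr ⟨hF.packetCount_le, le_rfl⟩)) (PrefixLE.refl _)

lemma sdiff_maxLambdaPol (M : ℕ) (h : List (Fin N → Bool)) :
    h.headI \ maxLambdaPol M h = maxLambdaResidual M h.headI := by
  funext n
  change (h.headI n && !maxLambdaPol M h n) = _
  cases hF : h.headI n <;> simp [maxLambdaPol, maxLambdaResidual, hF, ← decide_not]

lemma policyValue_maxLambdaPol (M : ℕ) (lam : Fin N → ℝ) :
    ∀ (t : ℕ) (φ : (Fin (t + 1) → ℕ) → ℝ) (h : List (Fin N → Bool)),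
      policyValue lam (maxLambdaPol M) t φ h = maxLambdaValue M lam t φ h.headI
  | 0, _, _ => rfl
  | t + 1, φ, h => by
    simp only [policyValue, maxLambdaValue, sdiff_maxLambdaPol, policyValue_maxLambdaPol M lam t]
    rfl

section Trajectories

variable (pol : List (Fin N → Bool) → Fin N → Bool)

def historiesFrom (a : ℕ → Fin N → Bool) (h : List (Fin N → Bool)) : ℕ → List (Fin N → Bool)
  | 0 => h
  | u + 1 => nextState (historiesFrom a h u).headI (pol (historiesFrom a h u)) (a u) ::
      historiesFrom a h u

lemma histories_eq_historiesFrom (F0 : Fin N → Bool) (a : ℕ → Fin N → Bool) :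
    histories F0 pol a = historiesFrom pol a [F0] := by
  funext u
  induction u with
  | zero => rfl
  | succ u ih => rw [histories, historiesFrom, ih]

lemma historiesFrom_succ_shift (a : ℕ → Fin N → Bool) (h : List (Fin N → Bool)) :
    ∀ u, historiesFrom pol a h (u + 1) =
      historiesFrom pol (fun s => a (s + 1)) (nextState h.headI (pol h) (a 0) :: h) u
  | 0 => rfl
  | u + 1 => by rw [historiesFrom, historiesFrom_succ_shift a h u]; rfl

def pathCounts : (t : ℕ) → List (Fin N → Bool) → (Fin t → Fin N → Bool) → Fin (t + 1) → ℕ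
  | 0, h, _ => fun _ => packetCount h.headI
  | t + 1, h, v => Fin.cons (packetCount h.headI)
      (pathCounts t (nextState h.headI (pol h) (v 0) :: h) (Fin.tail v))

lemma pathCounts_eq :
    ∀ (t : ℕ) (h : List (Fin N → Bool)) (a : ℕ → Fin N → Bool),
      pathCounts pol t h (fun s => a s) =
        fun i : Fin (t + 1) => packetCount (historiesFrom pol a h i).headI
  | 0, _, _ => by
    funext i
    fin_cases i
    rfl
  | t + 1, h, a => by
    funext i
    refine Fin.cases rfl (fun i => ?_) i
    rw [pathCounts, Fin.cons_succ, Fin.val_succ, historiesFrom_succ_shift]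
    exact congrFun (pathCounts_eq t _ fun s => a (s + 1)) i

lemma policyValue_eq_sum (lam : Fin N → ℝ) :
    ∀ (t : ℕ) (φ : (Fin (t + 1) → ℕ) → ℝ) (h : List (Fin N → Bool)),
      policyValue lam pol t φ h =
        ∑ v : Fin t → Fin N → Bool, (∏ s, arrivalWeight lam (v s)) * φ (pathCounts pol t h v)
  | 0, _, _ => by simp [policyValue, pathCounts]
  | t + 1, φ, h => by
    rw [← (Fin.consEquiv fun _ => Fin N → Bool).sum_comp, Fintype.sum_prod_type, policyValue,
      arrivalAvg]
    refine sum_congr rfl fun α _ => ?_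
    rw [policyValue_eq_sum lam t, mul_sum]
    refine sum_congr rfl fun v _ => ?_
    simp only [Fin.consEquiv, Equiv.coe_fn_mk, pathCounts, Fin.prod_univ_succ, Fin.cons_zero,
      Fin.cons_succ, Fin.tail_cons, mul_assoc]
    rfl

end Trajectories

section Probability

variable {Ω : Type*} [MeasurableSpace Ω] {μ : Measure Ω}

lemma measure_eq_bernoulliWeight [IsProbabilityMeasure μ] {X : Ω → Bool} (hX : Measurable X)
    {p : ℝ} (hp : 0 ≤ p) (hXp : μ {ω | X ω = true} = ENNReal.ofReal p) (b : Bool) :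
    μ {ω | X ω = b} = ENNReal.ofReal (bernoulliWeight p b) := by
  cases b
  · have hcompl : {ω | X ω = false} = {ω | X ω = true}ᶜ := by ext; simp
    have hmeas : MeasurableSet {ω | X ω = true} := hX (measurableSet_singleton true)
    rw [hcompl, prob_compl_eq_one_sub hmeas, hXp, bernoulliWeight,
      if_neg Bool.false_ne_true, ENNReal.ofReal_sub _ hp, ENNReal.ofReal_one]
  · exact hXp

variable [IsProbabilityMeasure μ] {lam : Fin N → ℝ} {A : ℕ → Ω → Fin N → Bool}

lemma measure_arrivals_eq (hlam : ∀ n, 0 ≤ lam n ∧ lam n ≤ 1)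
    (hAmeas : ∀ t n, Measurable fun ω => A t ω n)
    (hAdist : ∀ t n, μ {ω | A t ω n = true} = ENNReal.ofReal (lam n))
    (hAindep : iIndepFun (fun (p : ℕ × Fin N) ω => A p.1 ω p.2) μ) (t : ℕ)
    (v : Fin t → Fin N → Bool) :
    μ {ω | (fun s : Fin t => A s ω) = v} = ENNReal.ofReal (∏ s, arrivalWeight lam (v s)) := by
  have hindep : iIndepFun (fun (p : Fin t × Fin N) ω => A p.1 ω p.2) μ :=
    hAindep.precomp (g := fun p => ((p.1 : ℕ), p.2))
      fun p q hpq => Prod.ext (Fin.ext (Prod.ext_iff.mp hpq).1) (Prod.ext_iff.mp hpq).2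
  have hset : {ω | (fun s : Fin t => A s ω) = v} =
      ⋂ p ∈ (univ : Finset (Fin t × Fin N)), (fun ω => A p.1 ω p.2) ⁻¹' {v p.1 p.2} := by
    ext ω
    simp [funext_iff]
  rw [hset, hindep.measure_inter_preimage_eq_mul _ fun _ _ => measurableSet_singleton _]
  simp only [Set.preimage, Set.mem_singleton_iff,
    measure_eq_bernoulliWeight (hAmeas _ _) (hlam _).1 (hAdist _ _)]
  rw [← ENNReal.ofReal_prod_of_nonneg fun p _ => bernoulliWeight_nonneg (hlam p.2) _,
    Fintype.prod_prod_type]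
  rfl

lemma measure_arrivals_mem (hlam : ∀ n, 0 ≤ lam n ∧ lam n ≤ 1)
    (hAmeas : ∀ t n, Measurable fun ω => A t ω n)
    (hAdist : ∀ t n, μ {ω | A t ω n = true} = ENNReal.ofReal (lam n))
    (hAindep : iIndepFun (fun (p : ℕ × Fin N) ω => A p.1 ω p.2) μ) (t : ℕ)
    (S : Finset (Fin t → Fin N → Bool)) :
    μ {ω | (fun s : Fin t => A s ω) ∈ S} =
      ENNReal.ofReal (∑ v ∈ S, ∏ s, arrivalWeight lam (v s)) := by
  have hX : Measurable fun ω (s : Fin t) => A s ω :=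
    measurable_pi_lambda _ fun s => measurable_pi_lambda _ fun n => hAmeas s n
  rw [ENNReal.ofReal_sum_of_nonneg fun v _ => prod_nonneg fun s _ => arrivalWeight_nonneg hlam _]
  refine (sum_measure_preimage_singleton S fun v _ => hX (measurableSet_singleton v)).symm.trans ?_
  exact sum_congr rfl fun v _ => measure_arrivals_eq hlam hAmeas hAdist hAindep t v

lemma measure_trajectory_mem (hlam : ∀ n, 0 ≤ lam n ∧ lam n ≤ 1)
    (hAmeas : ∀ t n, Measurable fun ω => A t ω n)
    (hAdist : ∀ t n, μ {ω | A t ω n = true} = ENNReal.ofReal (lam n))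
    (hAindep : iIndepFun (fun (p : ℕ × Fin N) ω => A p.1 ω p.2) μ) (F0 : Fin N → Bool)
    (pol : List (Fin N → Bool) → Fin N → Bool) (t : ℕ) (S : Set (Fin (t + 1) → ℕ)) :
    μ {ω | (fun i : Fin (t + 1) => packetCount (stateAt F0 pol (fun s => A s ω) i)) ∈ S} =
      ENNReal.ofReal (policyValue lam pol t (S.indicator 1) [F0]) := by
  classical
  have hpath : ∀ ω, (fun i : Fin (t + 1) => packetCount (stateAt F0 pol (fun s => A s ω) i)) =
      pathCounts pol t [F0] fun s => A s ω := fun ω => by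
    rw [pathCounts_eq pol t [F0] fun s => A s ω]
    simp only [stateAt, histories_eq_historiesFrom]
  simp_rw [hpath]
  have hmem := measure_arrivals_mem hlam hAmeas hAdist hAindep t
    (univ.filter fun v => pathCounts pol t [F0] v ∈ S)
  simp only [mem_filter, mem_univ, true_and] at hmem
  rw [hmem, policyValue_eq_sum, sum_filter]
  congr 1
  refine sum_congr rfl fun v _ => ?_
  by_cases hv : pathCounts pol t [F0] v ∈ S <;> simp [hv]

end Probability

end SingleBuffer

open SingleBuffer in
theorem stmt14_general {N M : ℕ}
    (lam : Fin N → ℝ) (hlam_mono : Monotone lam)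
    (hlam : ∀ n, 0 < lam n ∧ lam n < 1)
    {Ω : Type*} [MeasureSpace Ω] (hprob : IsProbabilityMeasure (volume : Measure Ω))
    (A : ℕ → Ω → Fin N → Bool)
    (hAmeas : ∀ t n, Measurable (fun ω => A t ω n))
    (hAdist : ∀ t n, volume {ω | A t ω n = true} = ENNReal.ofReal (lam n))
    (hAindep : iIndepFun
      (fun (p : ℕ × Fin N) ω => A p.1 ω p.2) volume)
    (F0 : Fin N → Bool)
    (pol : List (Fin N → Bool) → (Fin N → Bool))
    (hwc : WorkConserving M pol)
    (t : ℕ) (z : ℝ)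
    (g : (Fin (t + 1) → ℝ) → ℝ) (hgmono : Monotone g) :
    volume {ω | z < g (fun i =>
        (packetCount (stateAt F0 pol (fun s => A s ω) (i : ℕ)) : ℝ))} ≤
    volume {ω | z < g (fun i =>
        (packetCount (stateAt F0 (maxLambdaPol M) (fun s => A s ω) (i : ℕ)) : ℝ))} := by
  have hlam' : ∀ n, 0 ≤ lam n ∧ lam n ≤ 1 := fun n => ⟨(hlam n).1.le, (hlam n).2.le⟩
  let S : Set (Fin (t + 1) → ℕ) := {u | z < g fun i => (u i : ℝ)}
  have hS : Monotone (S.indicator (1 : (Fin (t + 1) → ℕ) → ℝ)) := fun u v huv => by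
    by_cases hu : u ∈ S
    · have hv : v ∈ S := lt_of_lt_of_le hu (hgmono fun i => Nat.cast_le.mpr (huv i))
      simp [hu, hv]
    · simp [hu, Set.indicator_nonneg]
  calc _ = ENNReal.ofReal (policyValue lam pol t (S.indicator 1) [F0]) :=
        measure_trajectory_mem hlam' hAmeas hAdist hAindep F0 pol t S
    _ ≤ ENNReal.ofReal (policyValue lam (maxLambdaPol M) t (S.indicator 1) [F0]) := by
        rw [policyValue_maxLambdaPol]
        exact ENNReal.ofReal_le_ofReal
          (policyValue_le_maxLambdaValue hlam' hlam_mono hwc t hS (PrefixLE.refl F0))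
    _ = _ := (measure_trajectory_mem hlam' hAmeas hAdist hAindep F0 (maxLambdaPol M) t S).symm

/-- stochastic ordering of total packet processes: for any
work-conserving policy `π`, the total packet process under `π` is stochastically
dominated by that under Max-λ: every monotone measurable functional of the trajectory
exceeds any level `z` with no larger probability. -/
theorem stmt14 {N M : ℕ} (hMN : M < N) (hM : 0 < M)
    (lam : Fin N → ℝ) (hlam_mono : Monotone lam)
    (hlam : ∀ n, 0 < lam n ∧ lam n < 1)
    {Ω : Type*} [MeasureSpace Ω] (hprob : IsProbabilityMeasure (volume : Measure Ω))
    (A : ℕ → Ω → Fin N → Bool)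
    (hAmeas : ∀ t n, Measurable (fun ω => A t ω n))
    (hAdist : ∀ t n, volume {ω | A t ω n = true} = ENNReal.ofReal (lam n))
    (hAindep : iIndepFun
      (fun (p : ℕ × Fin N) ω => A p.1 ω p.2) volume)
    (F0 : Fin N → Bool)
    (pol : List (Fin N → Bool) → (Fin N → Bool))
    (hwc : WorkConserving M pol)
    (t : ℕ) (z : ℝ)
    (g : (Fin (t + 1) → ℝ) → ℝ) (hgmeas : Measurable g) (hgmono : Monotone g) :
    volume {ω | z < g (fun i =>
        (packetCount (stateAt F0 pol (fun s => A s ω) (i : ℕ)) : ℝ))} ≤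
    volume {ω | z < g (fun i =>
        (packetCount (stateAt F0 (maxLambdaPol M) (fun s => A s ω) (i : ℕ)) : ℝ))} :=
  stmt14_general lam hlam_mono hlam hprob A hAmeas hAdist hAindep F0 pol hwc t z g hgmono
end

section
/- (Corollary 1) In the N single-buffer queue system with M servers, Bernoulli(λ_n) arrivals with λ_1 ≤ … ≤ λ_N, 0 < λ_n < 1, and a fixed initial state F(0): for every work-conserving policy π and every slot t, the expected number of packets transmitted satisfies E[S^π(t)] ≤ E[S^{Max-λ}(t)], where S(t) = min(M, U(t)) is the number of packets transmitted on slot t. Consequently, the Max-λ policy maximizes throughput within the class of work-conserving policies. -/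
open MeasureTheory ProbabilityTheory Finset

/-!
Write `R(F)` for the buffers Max-λ leaves unserved in state `F`, and `T H (F) = E[H(R(F) ∨ a)]`
over the arrivals `a` of one slot; the expected throughput of Max-λ at slot `t` is `Tᵗ f (F(0))`
with `f = min(M, |·|)`. Call `H` admissible if it is monotone and does not decrease when a packet
moves to a buffer of lower arrival rate. Then `f` is admissible, and `T` preserves admissibility:
for neighbouring buffers the two unserved sets differ by exactly such a move, and conditioning on
the two arrival bits turns it into an inequality for `E[H(· ∨ a)]`. A work-conserving policy
leaves a set `K` no larger than `R(F)` whose packets outside `R(F)` all sit above `R(F)`; moving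
them down one at a time gives `E[H(K ∨ a)] ≤ T H (F)`, and backward induction over the slots
compares the two policies.
-/

open Function

namespace MaxLambda

variable {N : ℕ}

def arrivalWeight (lam : Fin N → ℝ) (a : Fin N → Bool) : ℝ :=
  ∏ n, if a n then lam n else 1 - lam n

def expectArrival (lam : Fin N → ℝ) (g : (Fin N → Bool) → ℝ) : ℝ :=
  ∑ a, arrivalWeight lam a * g a

variable {lam : Fin N → ℝ}

lemma bernoulliWeight_nonneg {p : ℝ} (hp : p ∈ Set.Icc 0 1) (b : Bool) :
    0 ≤ if b then p else 1 - p := by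
  cases b <;> simp [hp.1, hp.2]

lemma arrivalWeight_nonneg (hlam : ∀ n, lam n ∈ Set.Icc 0 1) (a : Fin N → Bool) :
    0 ≤ arrivalWeight lam a :=
  prod_nonneg fun n _ => bernoulliWeight_nonneg (hlam n) (a n)

lemma expectArrival_mono (hlam : ∀ n, lam n ∈ Set.Icc 0 1) {g g' : (Fin N → Bool) → ℝ}
    (hg : ∀ a, g a ≤ g' a) : expectArrival lam g ≤ expectArrival lam g' :=
  sum_le_sum fun a _ => mul_le_mul_of_nonneg_left (hg a) (arrivalWeight_nonneg hlam a)

lemma arrivalWeight_funSplitAt_symm (i : Fin N) (b : Bool) (r : {n // n ≠ i} → Bool) :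
    arrivalWeight lam ((Equiv.funSplitAt i Bool).symm (b, r))
      = (if b then lam i else 1 - lam i)
        * ∏ n : {n // n ≠ i}, if r n then lam n else 1 - lam n := by
  rw [arrivalWeight, Fintype.prod_eq_mul_prod_subtype_ne _ i]
  congr 1
  · simp
  · refine prod_congr rfl fun n _ => ?_
    simp [n.2]

lemma expectArrival_eq_cond (i : Fin N) (g : (Fin N → Bool) → ℝ) :
    expectArrival lam g = lam i * expectArrival lam (fun a => g (update a i true))
      + (1 - lam i) * expectArrival lam (fun a => g (update a i false)) := by
  simp only [expectArrival, mul_sum, ← sum_add_distrib]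
  rw [← (Equiv.funSplitAt i Bool).symm.sum_comp, ← (Equiv.funSplitAt i Bool).symm.sum_comp]
  simp only [Fintype.sum_prod_type, Fintype.sum_bool, ← sum_add_distrib,
    arrivalWeight_funSplitAt_symm]
  refine sum_congr rfl fun r _ => ?_
  have hupd : ∀ b c, update ((Equiv.funSplitAt i Bool).symm (b, r)) i c
      = (Equiv.funSplitAt i Bool).symm (c, r) := by
    intro b c
    ext n
    by_cases h : n = i <;> simp [h]
  simp only [hupd, Bool.false_eq_true, ↓reduceIte]
  ring

def occupied (F : Fin N → Bool) : Finset (Fin N) := univ.filter fun n => F n = true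

def occupiedAbove (F : Fin N → Bool) (n : Fin N) : Finset (Fin N) :=
  univ.filter fun m => n < m ∧ F m = true

lemma mem_occupied {F : Fin N → Bool} {n : Fin N} : n ∈ occupied F ↔ F n = true := by
  simp [occupied]

lemma packetCount_eq_card (F : Fin N → Bool) : packetCount F = #(occupied F) := by
  rw [occupied, card_filter]
  rfl

lemma occupied_strictMono : StrictMono (occupied (N := N)) := by
  intro F F' h
  obtain ⟨hle, n, hn⟩ := Pi.lt_def.1 h
  refine ssubset_of_subset_of_ne (fun m hm => ?_) fun he => ?_
  · exact mem_occupied.2 (Bool.le_iff_imp.1 (hle m) (mem_occupied.1 hm))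
  · obtain ⟨hFn, hF'n⟩ : F n = false ∧ F' n = true := by
      revert hn; cases F n <;> cases F' n <;> decide
    have := congrArg (n ∈ ·) he
    simp [mem_occupied, hFn, hF'n] at this

lemma packetCount_strictMono : StrictMono (packetCount (N := N)) := by
  intro F F' h
  simpa only [packetCount_eq_card] using card_lt_card (occupied_strictMono h)

lemma occupied_update_true (F : Fin N → Bool) (k : Fin N) :
    occupied (update F k true) = insert k (occupied F) := by
  ext n
  by_cases h : n = k <;> simp [mem_occupied, h]

lemma occupied_update_false (F : Fin N → Bool) (k : Fin N) :
    occupied (update F k false) = (occupied F).erase k := by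
  ext n
  by_cases h : n = k <;> simp [mem_occupied, h]

lemma packetCount_update_true {F : Fin N → Bool} {k : Fin N} (hk : F k = false) :
    packetCount (update F k true) = packetCount F + 1 := by
  rw [packetCount_eq_card, packetCount_eq_card, occupied_update_true,
    card_insert_of_notMem (by simp [mem_occupied, hk])]

lemma packetCount_sdiff_add {F s : Fin N → Bool} (hs : s ≤ F) :
    packetCount (F \ s) + packetCount s = packetCount F := by
  have hsub : occupied s ⊆ occupied F := fun n hn =>
    mem_occupied.2 (Bool.le_iff_imp.1 (hs n) (mem_occupied.1 hn))
  have hdiff : occupied (F \ s) = occupied F \ occupied s := by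
    ext n; simp only [mem_occupied, mem_sdiff, Pi.sdiff_apply]; cases F n <;> cases s n <;> decide
  simp only [packetCount_eq_card, hdiff, card_sdiff_add_card_eq_card hsub]

def maxLambdaRemaining (M : ℕ) (F : Fin N → Bool) : Fin N → Bool :=
  fun n => F n && decide (M ≤ #(occupiedAbove F n))

lemma occupiedAbove_mono {F F' : Fin N → Bool} (h : F ≤ F') (n : Fin N) :
    occupiedAbove F n ⊆ occupiedAbove F' n := by
  intro m
  simp only [occupiedAbove, mem_filter, mem_univ, true_and]
  exact fun hm => ⟨hm.1, Bool.le_iff_imp.1 (h m) hm.2⟩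

lemma card_occupiedAbove_anti (F : Fin N → Bool) {x y : Fin N} (hxy : x ≤ y) :
    #(occupiedAbove F y) ≤ #(occupiedAbove F x) := by
  refine card_le_card fun m => ?_
  simp only [occupiedAbove, mem_filter, mem_univ, true_and]
  exact fun hm => ⟨hxy.trans_lt hm.1, hm.2⟩

lemma card_occupiedAbove_lt {F : Fin N → Bool} {x y : Fin N} (hxy : x < y) (hy : F y = true) :
    #(occupiedAbove F y) < #(occupiedAbove F x) := by
  refine card_lt_card (ssubset_iff.2 ⟨y, by simp [occupiedAbove], fun m hm => ?_⟩)
  rcases mem_insert.1 hm with rfl | hm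
  all_goals simp only [occupiedAbove, mem_filter, mem_univ, true_and] at hm ⊢
  exacts [⟨hxy, hy⟩, ⟨hxy.trans hm.1, hm.2⟩]

lemma card_occupiedAbove_update_true {C : Fin N → Bool} {k : Fin N} (hk : C k = false)
    (n : Fin N) :
    #(occupiedAbove (update C k true) n) = #(occupiedAbove C n) + if n < k then 1 else 0 := by
  have : occupiedAbove (update C k true) n
      = if n < k then insert k (occupiedAbove C n) else occupiedAbove C n := by
    ext m
    by_cases hm : m = k <;> split_ifs <;> simp_all [occupiedAbove]
  rw [this]
  split_ifs
  · exact card_insert_of_notMem (by simp [occupiedAbove, hk])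
  · rfl

lemma maxLambdaRemaining_mono (M : ℕ) : Monotone (maxLambdaRemaining (N := N) M) := by
  intro F F' h n
  simp only [maxLambdaRemaining, Bool.le_iff_imp, Bool.and_eq_true, decide_eq_true_eq]
  exact fun ⟨hn, hM⟩ => ⟨Bool.le_iff_imp.1 (h n) hn,
    hM.trans (card_le_card (occupiedAbove_mono h n))⟩

lemma lt_of_maxLambdaRemaining {M : ℕ} {F : Fin N → Bool} {x y : Fin N}
    (hx : maxLambdaRemaining M F x = true) (hy : F y = true)
    (hy' : maxLambdaRemaining M F y = false) : x < y := by
  simp only [maxLambdaRemaining, Bool.and_eq_true, decide_eq_true_eq, hy, Bool.true_and,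
    decide_eq_false_iff_not, not_le] at hx hy'
  by_contra! hyx
  exact (hx.2.trans (card_occupiedAbove_anti F hyx)).not_gt hy'

lemma packetCount_le_maxLambdaRemaining_add (M : ℕ) (F : Fin N → Bool) :
    packetCount F ≤ packetCount (maxLambdaRemaining M F) + M := by
  set served := (occupied F).filter fun n => #(occupiedAbove F n) < M
  have hserved : #served ≤ M := by
    simpa using card_le_card_of_injOn (t := range M) (fun n => #(occupiedAbove F n))
      (fun n hn => by simpa using (mem_filter.1 hn).2) fun x hx y hy hxy => by
        have hFx := mem_occupied.1 (mem_filter.1 hx).1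
        have hFy := mem_occupied.1 (mem_filter.1 hy).1
        by_contra hne
        rcases lt_or_gt_of_ne hne with h | h
        exacts [(card_occupiedAbove_lt h hFy).ne' hxy, (card_occupiedAbove_lt h hFx).ne hxy]
  have hsub : occupied F ⊆ occupied (maxLambdaRemaining M F) ∪ served := by
    intro n hn
    by_cases hM : M ≤ #(occupiedAbove F n)
    · exact mem_union_left _ (mem_occupied.2 (by simp [maxLambdaRemaining, mem_occupied.1 hn, hM]))
    · exact mem_union_right _ (mem_filter.2 ⟨hn, not_le.1 hM⟩)
  rw [packetCount_eq_card, packetCount_eq_card]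
  exact (card_le_card hsub).trans ((card_union_le _ _).trans (by omega))

def transmitted (M : ℕ) (F : Fin N → Bool) : ℝ := min (M : ℝ) (packetCount F)

/-- Buffers are indexed by increasing arrival rate: a packet is better placed in the buffer
of lower rate, since the other one, left empty, is then the likelier to refill. -/
def PrefersLowIndex (H : (Fin N → Bool) → ℝ) : Prop :=
  ∀ ⦃C : Fin N → Bool⦄ ⦃i j : Fin N⦄, i < j → C i = false → C j = false →
    H (update C j true) ≤ H (update C i true)

lemma transmitted_mono (M : ℕ) : Monotone (transmitted (N := N) M) :=
  fun _ _ h => min_le_min le_rfl (by exact_mod_cast packetCount_strictMono.monotone h)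

lemma prefersLowIndex_transmitted (M : ℕ) : PrefersLowIndex (transmitted (N := N) M) := by
  intro C i j _ hi hj
  rw [transmitted, transmitted, packetCount_update_true hi, packetCount_update_true hj]

lemma update_true_sup_update {C : Fin N → Bool} {k l : Fin N} (hl : C l = false)
    (a : Fin N → Bool) (x : Bool) :
    update C k true ⊔ update a l x = update (update (C ⊔ a) l x) k true := by
  ext n
  simp only [Pi.sup_apply, update_apply]
  split_ifs <;> simp_all

variable {H : (Fin N → Bool) → ℝ}

lemma expectArrival_update_le (hlam : ∀ n, lam n ∈ Set.Icc 0 1) (hlam_mono : Monotone lam)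
    (hH : Monotone H) (hH' : PrefersLowIndex H) {C : Fin N → Bool} {i j : Fin N} (hij : i < j)
    (hi : C i = false) (hj : C j = false) :
    expectArrival lam (fun a => H (update C j true ⊔ a))
      ≤ expectArrival lam (fun a => H (update C i true ⊔ a)) := by
  set q : Bool → Bool → ℝ :=
    fun x y => expectArrival lam fun a => H (update (update (C ⊔ a) i x) j y)
  have hL : expectArrival lam (fun a => H (update C j true ⊔ a))
      = lam i * q true true + (1 - lam i) * q false true := by
    simp only [expectArrival_eq_cond i (fun a => H (update C j true ⊔ a)),
      update_true_sup_update hi, q]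
  have hR : expectArrival lam (fun a => H (update C i true ⊔ a))
      = lam j * q true true + (1 - lam j) * q true false := by
    simp only [expectArrival_eq_cond j (fun a => H (update C i true ⊔ a)),
      update_true_sup_update hj, update_comm hij.ne', q]
  have hq₁ : q false true ≤ q true true := expectArrival_mono hlam fun a =>
    hH (update_le_update_iff.2 ⟨le_rfl, fun k _ => update_mono (Bool.false_le true) k⟩)
  have hq₂ : q false true ≤ q true false := expectArrival_mono hlam fun a => by
    have := hH' (C := update (update (C ⊔ a) i false) j false) hij (by simp [hij.ne])
      (by simp)
    have hswap : update (update (update (C ⊔ a) i false) j false) i true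
        = update (update (C ⊔ a) i true) j false := by
      ext n; simp only [update_apply]; split_ifs <;> simp_all
    rwa [update_idem, hswap] at this
  rw [hL, hR]
  nlinarith [mul_nonneg (sub_nonneg.2 (hlam_mono hij.le)) (sub_nonneg.2 hq₁),
    mul_nonneg (sub_nonneg.2 (hlam j).2) (sub_nonneg.2 hq₂)]

/-- Exchange argument: moving the packets of `K` outside `L` one by one down to free buffers
of `L` turns `K` into a subset of `L`. -/
lemma expectArrival_le_of_forall_lt (hlam : ∀ n, lam n ∈ Set.Icc 0 1) (hlam_mono : Monotone lam)
    (hH : Monotone H) (hH' : PrefersLowIndex H) {K L : Fin N → Bool}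
    (hKL : ∀ x y, L x = true → K y = true → L y = false → x < y)
    (hcard : packetCount K ≤ packetCount L) :
    expectArrival lam (fun a => H (K ⊔ a)) ≤ expectArrival lam (fun a => H (L ⊔ a)) := by
  induction hd : #(occupied K \ occupied L) using Nat.strong_induction_on generalizing K with
  | _ d ih =>
  by_cases hle : K ≤ L
  · exact expectArrival_mono hlam fun a => hH (sup_le_sup_right hle a)
  obtain ⟨y, hKy, hLy⟩ : ∃ y, K y = true ∧ L y = false := by
    simpa [Pi.le_def, Bool.le_iff_imp] using hle
  obtain ⟨x, hLx, hKx⟩ : ∃ x, L x = true ∧ K x = false := by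
    by_contra! h
    have hLK : L < K := Pi.lt_def.2 ⟨fun n => Bool.le_iff_imp.2 fun hn => by simpa using h n hn,
      y, by simp [hKy, hLy]⟩
    exact (packetCount_strictMono hLK).not_ge hcard
  have hxy : x < y := hKL x y hLx hKy hLy
  set C := update K y false
  have hCx : C x = false := by simp [C, hxy.ne, hKx]
  have hK : update C y true = K := by simp [C, ← hKy]
  have hcount : packetCount (update C x true) = packetCount K := by
    rw [packetCount_update_true hCx, ← hK, packetCount_update_true (by simp [C])]
  calc expectArrival lam (fun a => H (K ⊔ a))
      = expectArrival lam (fun a => H (update C y true ⊔ a)) := by rw [hK]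
    _ ≤ expectArrival lam (fun a => H (update C x true ⊔ a)) :=
      expectArrival_update_le hlam hlam_mono hH hH' hxy hCx (by simp [C])
    _ ≤ expectArrival lam (fun a => H (L ⊔ a)) := by
      refine ih _ ?_ (fun x' y' hx' hy' hLy' => hKL x' y' hx' ?_ hLy') (hcount ▸ hcard) rfl
      · rw [← hd, occupied_update_true, occupied_update_false,
          insert_sdiff_of_mem _ (mem_occupied.2 hLx), erase_sdiff_comm]
        exact card_erase_lt_of_mem (mem_sdiff.2 ⟨mem_occupied.2 hKy, by simp [mem_occupied, hLy]⟩)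
      · have hy'x : y' ≠ x := by rintro rfl; simp [hLx] at hLy'
        rw [update_of_ne hy'x] at hy'
        by_cases hyy : y' = y
        · simp [C, hyy] at hy'
        · simpa [C, hyy] using hy'

lemma expectArrival_le_maxLambdaRemaining (hlam : ∀ n, lam n ∈ Set.Icc 0 1)
    (hlam_mono : Monotone lam) (hH : Monotone H) (hH' : PrefersLowIndex H) {M : ℕ}
    {K F : Fin N → Bool} (hKF : K ≤ F)
    (hK : packetCount K + min M (packetCount F) = packetCount F) :
    expectArrival lam (fun a => H (K ⊔ a))
      ≤ expectArrival lam (fun a => H (maxLambdaRemaining M F ⊔ a)) := by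
  refine expectArrival_le_of_forall_lt hlam hlam_mono hH hH' (fun x y hx hy hy' =>
    lt_of_maxLambdaRemaining hx (Bool.le_iff_imp.1 (hKF y) hy) hy') ?_
  have := packetCount_le_maxLambdaRemaining_add M F
  omega

lemma prefersLowIndex_of_adjacent
    (h : ∀ (C : Fin N → Bool) (i j : Fin N), (j : ℕ) = i + 1 → C i = false → C j = false →
      H (update C j true) ≤ H (update C i true)) :
    PrefersLowIndex H := by
  suffices ∀ d (C : Fin N → Bool) (i j : Fin N), (j : ℕ) = i + d + 1 → C i = false →
      C j = false → H (update C j true) ≤ H (update C i true) from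
    fun C i j hij => this (j - i - 1) C i j (by have := Fin.lt_def.1 hij; omega)
  intro d
  induction d with
  | zero => exact h
  | succ d ih =>
    intro C i j hij hi hj
    set m : Fin N := ⟨i + 1, by omega⟩
    have him : i ≠ m := Fin.ne_of_val_ne (by simp [m])
    have hmj : m ≠ j := Fin.ne_of_val_ne (by simp [m]; omega)
    have hij' : i ≠ j := Fin.ne_of_val_ne (by omega)
    cases hm : C m
    · exact (ih C m j (by simp [m]; omega) hm hj).trans (h C i m rfl hi hm)
    · -- `C = D ∪ {m}`: first move the packet at `m` down to `i`, then the one at `j` to `m`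
      set D := update C m false
      calc H (update C j true)
          = H (update (update D j true) m true) := by
            congr 1; ext n; simp only [D, update_apply]; split_ifs <;> simp_all
        _ ≤ H (update (update D j true) i true) :=
            h _ i m rfl (by simp [D, hi, him, hij']) (by simp [D, hmj])
        _ = H (update (update D i true) j true) := by
            rw [update_comm hij'.symm]
        _ ≤ H (update (update D i true) m true) :=
            ih _ m j (by simp [m]; omega) (by simp [D, him.symm])
              (by simp [D, hmj.symm, hij'.symm, hj])
        _ = H (update C i true) := by
            congr 1; ext n; simp only [D, update_apply]; split_ifs <;> simp_all

def maxLambdaStep (M : ℕ) (lam : Fin N → ℝ) (H : (Fin N → Bool) → ℝ) (F : Fin N → Bool) : ℝ :=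
  expectArrival lam fun a => H (maxLambdaRemaining M F ⊔ a)

lemma maxLambdaStep_mono (hlam : ∀ n, lam n ∈ Set.Icc 0 1) (hH : Monotone H) (M : ℕ) :
    Monotone (maxLambdaStep M lam H) := fun _ _ h =>
  expectArrival_mono hlam fun a => hH (sup_le_sup_right (maxLambdaRemaining_mono M h) a)

lemma occupiedAbove_eq_of_adjacent {C : Fin N → Bool} {i j : Fin N} (hij : (j : ℕ) = i + 1)
    (hj : C j = false) : occupiedAbove C i = occupiedAbove C j := by
  ext m
  simp only [occupiedAbove, mem_filter, mem_univ, true_and, Fin.lt_def]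
  by_cases hm : m = j
  · simp [hm, hj]
  · have := Fin.val_ne_of_ne hm
    constructor <;> rintro ⟨h, hC⟩ <;> exact ⟨by omega, hC⟩

lemma maxLambdaRemaining_update_adjacent (M : ℕ) {C : Fin N → Bool} {i j : Fin N}
    (hij : (j : ℕ) = i + 1) (hi : C i = false) (hj : C j = false) :
    ∃ D b, D i = false ∧ D j = false ∧ maxLambdaRemaining M (update C i true) = update D i b ∧
      maxLambdaRemaining M (update C j true) = update D j b := by
  have hne : j ≠ i := Fin.ne_of_val_ne (by omega)
  refine ⟨update (maxLambdaRemaining M (update C i true)) i false,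
    decide (M ≤ #(occupiedAbove C j)), by simp, by simp [hne, maxLambdaRemaining, hj], ?_, ?_⟩
  all_goals
    ext n
    simp only [maxLambdaRemaining, update_apply, card_occupiedAbove_update_true hi,
      card_occupiedAbove_update_true hj]
  · by_cases hn : n = i
    · simp [hn, occupiedAbove_eq_of_adjacent hij hj]
    · simp [hn]
  · by_cases hnj : n = j
    · simp [hnj]
    by_cases hni : n = i
    · simp [hni, hne.symm, hi]
    have : n < i ↔ n < j := by simp only [Fin.lt_def, ← Fin.val_ne_iff] at hni hnj ⊢; omega
    simp [hni, hnj, this]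

lemma maxLambdaStep_prefersLowIndex (hlam : ∀ n, lam n ∈ Set.Icc 0 1) (hlam_mono : Monotone lam)
    (hH : Monotone H) (hH' : PrefersLowIndex H) (M : ℕ) :
    PrefersLowIndex (maxLambdaStep M lam H) := by
  refine prefersLowIndex_of_adjacent fun C i j hij hi hj => ?_
  obtain ⟨D, b, hDi, hDj, hA, hB⟩ := maxLambdaRemaining_update_adjacent M hij hi hj
  simp only [maxLambdaStep, hA, hB]
  cases b
  · have hDi' : update D i false = D := update_eq_self_iff.2 hDi.symm
    have hDj' : update D j false = D := update_eq_self_iff.2 hDj.symm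
    rw [hDi', hDj']
  · exact expectArrival_update_le hlam hlam_mono hH hH' (Fin.lt_def.2 (by omega)) hDi hDj

def maxLambdaValue (M : ℕ) (lam : Fin N → ℝ) (t : ℕ) : (Fin N → Bool) → ℝ :=
  (maxLambdaStep M lam)^[t] (transmitted M)

lemma maxLambdaValue_succ (M t : ℕ) :
    maxLambdaValue M lam (t + 1) = maxLambdaStep M lam (maxLambdaValue M lam t) :=
  iterate_succ_apply' _ _ _

lemma maxLambdaValue_mono_and_prefersLowIndex (hlam : ∀ n, lam n ∈ Set.Icc 0 1)
    (hlam_mono : Monotone lam) (M t : ℕ) :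
    Monotone (maxLambdaValue M lam t) ∧ PrefersLowIndex (maxLambdaValue M lam t) := by
  induction t with
  | zero => exact ⟨transmitted_mono M, prefersLowIndex_transmitted M⟩
  | succ t ih =>
    rw [maxLambdaValue_succ]
    exact ⟨maxLambdaStep_mono hlam ih.1 M,
      maxLambdaStep_prefersLowIndex hlam hlam_mono ih.1 ih.2 M⟩

variable (pol : List (Fin N → Bool) → (Fin N → Bool))

def extendHistory (L : List (Fin N → Bool)) (a : Fin N → Bool) : List (Fin N → Bool) :=
  nextState L.headI (pol L) a :: L

def historyAfter : List (Fin N → Bool) → (t : ℕ) → (Fin t → Fin N → Bool) → List (Fin N → Bool)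
  | L, 0, _ => L
  | L, t + 1, v => historyAfter (extendHistory pol L (v 0)) t (Fin.tail v)

lemma historyAfter_succ' (t : ℕ) (L : List (Fin N → Bool)) (v : Fin (t + 1) → Fin N → Bool) :
    historyAfter pol L (t + 1) v
      = extendHistory pol (historyAfter pol L t (Fin.init v)) (v (Fin.last t)) := by
  induction t generalizing L with
  | zero => rfl
  | succ t ih =>
    rw [historyAfter, ih, historyAfter, Fin.tail_init_eq_init_tail]
    rfl

lemma histories_eq_historyAfter (F0 : Fin N → Bool) (a : ℕ → Fin N → Bool) (t : ℕ) :
    histories F0 pol a t = historyAfter pol [F0] t (fun s => a s) := by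
  induction t with
  | zero => rfl
  | succ t ih => rw [historyAfter_succ', histories, ih]; rfl

def expectArrivals (lam : Fin N → ℝ) (t : ℕ) (Φ : (Fin t → Fin N → Bool) → ℝ) : ℝ :=
  ∑ v, (∏ s, arrivalWeight lam (v s)) * Φ v

lemma expectArrivals_succ (t : ℕ) (Φ : (Fin (t + 1) → Fin N → Bool) → ℝ) :
    expectArrivals lam (t + 1) Φ
      = expectArrival lam fun a => expectArrivals lam t fun v => Φ (Fin.cons a v) := by
  rw [expectArrivals, ← (Fin.consEquiv fun _ => Fin N → Bool).sum_comp, Fintype.sum_prod_type]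
  simp only [expectArrival, expectArrivals, mul_sum, Fin.prod_univ_succ, mul_assoc]
  rfl

def policyValue (M : ℕ) (lam : Fin N → ℝ) (t : ℕ) (L : List (Fin N → Bool)) : ℝ :=
  expectArrivals lam t fun v => transmitted M (historyAfter pol L t v).headI

lemma policyValue_zero (M : ℕ) (L : List (Fin N → Bool)) :
    policyValue pol M lam 0 L = transmitted M L.headI := by
  simp [policyValue, expectArrivals, historyAfter]

lemma policyValue_succ (M t : ℕ) (L : List (Fin N → Bool)) :
    policyValue pol M lam (t + 1) L
      = expectArrival lam fun a => policyValue pol M lam t (extendHistory pol L a) := by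
  simp only [policyValue, expectArrivals_succ, historyAfter, Fin.cons_zero, Fin.tail_cons]

variable {pol}

lemma policyValue_le_maxLambdaValue (hlam : ∀ n, lam n ∈ Set.Icc 0 1) (hlam_mono : Monotone lam)
    {M : ℕ} (hwc : WorkConserving M pol) (t : ℕ) (L : List (Fin N → Bool)) :
    policyValue pol M lam t L ≤ maxLambdaValue M lam t L.headI := by
  induction t generalizing L with
  | zero => rw [policyValue_zero]; rfl
  | succ t ih =>
    obtain ⟨hmono, hprefers⟩ := maxLambdaValue_mono_and_prefersLowIndex hlam hlam_mono M t
    have hserved : pol L ≤ L.headI := fun n => Bool.le_iff_imp.2 ((hwc L).1 n)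
    rw [policyValue_succ, maxLambdaValue_succ]
    calc expectArrival lam (fun a => policyValue pol M lam t (extendHistory pol L a))
        ≤ expectArrival lam (fun a => maxLambdaValue M lam t (L.headI \ pol L ⊔ a)) :=
          expectArrival_mono hlam fun a => ih _
      _ ≤ maxLambdaStep M lam (maxLambdaValue M lam t) L.headI :=
          expectArrival_le_maxLambdaRemaining hlam hlam_mono hmono hprefers sdiff_le
            (by rw [← (hwc L).2, packetCount_sdiff_add hserved])

lemma policyValue_maxLambdaPol (M t : ℕ) (L : List (Fin N → Bool)) :
    policyValue (maxLambdaPol M) M lam t L = maxLambdaValue M lam t L.headI := by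
  induction t generalizing L with
  | zero => rw [policyValue_zero]; rfl
  | succ t ih =>
    have hstep : ∀ a, (extendHistory (maxLambdaPol M) L a).headI
        = maxLambdaRemaining M L.headI ⊔ a := by
      intro a; ext n
      change nextState L.headI (maxLambdaPol M L) a n = (maxLambdaRemaining M L.headI n || a n)
      cases hn : L.headI n
      · simp [nextState, maxLambdaRemaining, hn]
      · simp only [nextState, maxLambdaPol, maxLambdaRemaining, occupiedAbove, hn, Bool.true_and,
          ← decide_not, Nat.not_lt]
        rfl
    simp only [policyValue_succ, ih, hstep, maxLambdaValue_succ, maxLambdaStep]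

section Probability

variable {Ω : Type*} [MeasurableSpace Ω] {μ : Measure Ω} [IsProbabilityMeasure μ]

lemma measure_eq_ofReal_of_bool {X : Ω → Bool} (hX : Measurable X) {p : ℝ} (hp : p ∈ Set.Icc 0 1)
    (htrue : μ {ω | X ω = true} = ENNReal.ofReal p) (b : Bool) :
    μ {ω | X ω = b} = ENNReal.ofReal (if b then p else 1 - p) := by
  cases b
  · have hcompl : {ω | X ω = false} = {ω | X ω = true}ᶜ := by ext; simp
    have hmeas : MeasurableSet {ω | X ω = true} := hX (measurableSet_singleton true)
    rw [hcompl, prob_compl_eq_one_sub hmeas, htrue,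
      ← ENNReal.ofReal_one, ← ENNReal.ofReal_sub 1 hp.1]
    rfl
  · exact htrue

lemma measure_arrivals_eq {A : ℕ → Ω → Fin N → Bool} (hlam : ∀ n, lam n ∈ Set.Icc 0 1)
    (hAmeas : ∀ t n, Measurable (fun ω => A t ω n))
    (hAdist : ∀ t n, μ {ω | A t ω n = true} = ENNReal.ofReal (lam n))
    (hAindep : iIndepFun (fun (p : ℕ × Fin N) ω => A p.1 ω p.2) μ)
    {t : ℕ} (v : Fin t → Fin N → Bool) :
    μ {ω | (fun (s : Fin t) n => A s ω n) = v} = ENNReal.ofReal (∏ s, arrivalWeight lam (v s)) := by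
  have hindep : iIndepFun (fun (p : Fin t × Fin N) ω => A p.1 ω p.2) μ :=
    hAindep.precomp (g := Prod.map Fin.val id) (Fin.val_injective.prodMap injective_id)
  have hset : {ω | (fun (s : Fin t) n => A s ω n) = v}
      = ⋂ p ∈ (univ : Finset (Fin t × Fin N)), (fun ω => A p.1 ω p.2) ⁻¹' {v p.1 p.2} := by
    ext ω; simp [funext_iff]
  rw [hset, hindep.measure_inter_preimage_eq_mul _ fun _ _ => measurableSet_singleton _,
    Fintype.prod_prod_type, ENNReal.ofReal_prod_of_nonneg fun s _ => arrivalWeight_nonneg hlam _]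
  refine prod_congr rfl fun s _ => ?_
  rw [arrivalWeight, ENNReal.ofReal_prod_of_nonneg fun n _ => bernoulliWeight_nonneg (hlam n) _]
  exact prod_congr rfl fun n _ =>
    measure_eq_ofReal_of_bool (hAmeas s n) (hlam n) (hAdist s n) (v s n)

lemma integral_comp_arrivals {A : ℕ → Ω → Fin N → Bool} (hlam : ∀ n, lam n ∈ Set.Icc 0 1)
    (hAmeas : ∀ t n, Measurable (fun ω => A t ω n))
    (hAdist : ∀ t n, μ {ω | A t ω n = true} = ENNReal.ofReal (lam n))
    (hAindep : iIndepFun (fun (p : ℕ × Fin N) ω => A p.1 ω p.2) μ)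
    (t : ℕ) (Φ : (Fin t → Fin N → Bool) → ℝ) :
    ∫ ω, Φ (fun s n => A s ω n) ∂μ = expectArrivals lam t Φ := by
  have hX : Measurable fun ω (s : Fin t) n => A s ω n :=
    measurable_pi_lambda _ fun s => measurable_pi_lambda _ fun n => hAmeas s n
  rw [← integral_map hX.aemeasurable Measurable.of_discrete.aestronglyMeasurable,
    integral_fintype Integrable.of_finite]
  refine sum_congr rfl fun v _ => ?_
  rw [map_measureReal_apply hX (measurableSet_singleton v), smul_eq_mul, measureReal_def]
  simp only [Set.preimage, Set.mem_singleton_iff]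
  rw [measure_arrivals_eq hlam hAmeas hAdist hAindep v,
    ENNReal.toReal_ofReal (prod_nonneg fun s _ => arrivalWeight_nonneg hlam (v s))]

end Probability

end MaxLambda

theorem stmt15_general {N M : ℕ}
    (lam : Fin N → ℝ) (hlam_mono : Monotone lam)
    (hlam : ∀ n, 0 < lam n ∧ lam n < 1)
    {Ω : Type*} [MeasureSpace Ω] (hprob : IsProbabilityMeasure (volume : Measure Ω))
    (A : ℕ → Ω → Fin N → Bool)
    (hAmeas : ∀ t n, Measurable (fun ω => A t ω n))
    (hAdist : ∀ t n, volume {ω | A t ω n = true} = ENNReal.ofReal (lam n))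
    (hAindep : iIndepFun
      (fun (p : ℕ × Fin N) ω => A p.1 ω p.2) volume)
    (F0 : Fin N → Bool)
    (pol : List (Fin N → Bool) → (Fin N → Bool))
    (hwc : WorkConserving M pol)
    (t : ℕ) :
    ∫ ω, min (M : ℝ) (packetCount (stateAt F0 pol (fun s => A s ω) t) : ℝ) ≤
    ∫ ω, min (M : ℝ) (packetCount (stateAt F0 (maxLambdaPol M) (fun s => A s ω) t) : ℝ) := by
  have := hprob
  have hlam' : ∀ n, lam n ∈ Set.Icc 0 1 := fun n => ⟨(hlam n).1.le, (hlam n).2.le⟩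
  have hvalue (pol' : List (Fin N → Bool) → (Fin N → Bool)) :
      ∫ ω, min (M : ℝ) (packetCount (stateAt F0 pol' (fun s => A s ω) t) : ℝ)
        = MaxLambda.policyValue pol' M lam t [F0] := by
    simp only [stateAt, MaxLambda.histories_eq_historyAfter]
    exact MaxLambda.integral_comp_arrivals hlam' hAmeas hAdist hAindep t
      fun v => MaxLambda.transmitted M (MaxLambda.historyAfter pol' [F0] t v).headI
  rw [hvalue, hvalue, MaxLambda.policyValue_maxLambdaPol]
  exact MaxLambda.policyValue_le_maxLambdaValue hlam' hlam_mono hwc t [F0]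

/-- Corollary 1: for every work-conserving policy `π` and every slot `t`,
the expected number of packets transmitted, `E[min(M, U(t))]`, is no larger under `π`
than under the Max-λ policy; hence Max-λ maximizes throughput among work-conserving
policies. -/
theorem stmt15 {N M : ℕ} (hMN : M < N) (hM : 0 < M)
    (lam : Fin N → ℝ) (hlam_mono : Monotone lam)
    (hlam : ∀ n, 0 < lam n ∧ lam n < 1)
    {Ω : Type*} [MeasureSpace Ω] (hprob : IsProbabilityMeasure (volume : Measure Ω))
    (A : ℕ → Ω → Fin N → Bool)
    (hAmeas : ∀ t n, Measurable (fun ω => A t ω n))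
    (hAdist : ∀ t n, volume {ω | A t ω n = true} = ENNReal.ofReal (lam n))
    (hAindep : iIndepFun
      (fun (p : ℕ × Fin N) ω => A p.1 ω p.2) volume)
    (F0 : Fin N → Bool)
    (pol : List (Fin N → Bool) → (Fin N → Bool))
    (hwc : WorkConserving M pol)
    (t : ℕ) :
    ∫ ω, min (M : ℝ) (packetCount (stateAt F0 pol (fun s => A s ω) t) : ℝ) ≤
    ∫ ω, min (M : ℝ) (packetCount (stateAt F0 (maxLambdaPol M) (fun s => A s ω) t) : ℝ) :=
  stmt15_general lam hlam_mono hlam hprob A hAmeas hAdist hAindep F0 pol hwc t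
end

section
/- (Appendix A) Consider the Markov chain on {0,1}² describing two single-buffer queues served by one server with strict priority to queue 1: from state (1,1) the next state is (A_1, 1), and from each of the states (0,0), (1,0), (0,1) the next state is (A_1, A_2), where A_1, A_2 are independent Bernoulli(λ_1) and Bernoulli(λ_2) random variables drawn fresh each slot. For 0 < λ_1, λ_2 < 1 this chain has a unique stationary distribution, the stationary probability of state (1,1) is q = λ_1 λ_2 / (1 − λ_1 + λ_1 λ_2), and the stationary throughput (the stationary probability of a nonempty state) equals θ(λ_1, λ_2) = 1 − (1 − q)(1 − λ_1)(1 − λ_2). In particular θ(1/2, 1/4) = 7/10 and θ(1/4, 1/2) = 19/28, so θ(1/2, 1/4) > θ(1/4, 1/2): giving priority to the higher-rate queue (Max-λ) yields strictly higher throughput than giving priority to the lower-rate queue (Min-λ). -/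
open Finset

/-- Transition probabilities of the two single-buffer-queue chain with one server and
strict priority to queue 1: from state `(1,1)` the next state is `(A₁, 1)`; from the
states `(0,0)`, `(1,0)`, `(0,1)` the next state is `(A₁, A₂)`, where `A₁ ~ Bern(l1)`
and `A₂ ~ Bern(l2)` are independent and drawn fresh each slot. -/
def prioTrans (l1 l2 : ℝ) : Bool × Bool → Bool × Bool → ℝ :=
  fun s s' =>
    if s = (true, true) then
      (if s'.2 = true then (if s'.1 then l1 else 1 - l1) else 0)
    else
      (if s'.1 then l1 else 1 - l1) * (if s'.2 then l2 else 1 - l2)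

/-- `ν` is a stationary distribution of the priority chain. -/
def IsStationaryPrio (l1 l2 : ℝ) (ν : Bool × Bool → ℝ) : Prop :=
  (∀ s, 0 ≤ ν s) ∧ (∑ s : Bool × Bool, ν s) = 1 ∧
    ∀ s' : Bool × Bool, ν s' = ∑ s : Bool × Bool, ν s * prioTrans l1 l2 s s'

/-- The closed-form stationary throughput `θ(λ₁, λ₂) = 1 − (1−q)(1−λ₁)(1−λ₂)` with
`q = λ₁λ₂ / (1 − λ₁ + λ₁λ₂)`. -/
noncomputable def prioThroughput (l1 l2 : ℝ) : ℝ :=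
  1 - (1 - l1 * l2 / (1 - l1 + l1 * l2)) * (1 - l1) * (1 - l2)

/-!
Every row of the transition matrix other than that of `(1,1)` is the product-Bernoulli row,
so one step of the chain maps a distribution `ν` to the mixture of the row of `(1,1)` and the
product row with weights `q = ν (1,1)` and `1 - q`. A stationary `ν` is therefore this mixture,
and the balance equation at `(1,1)`, `q = λ₁ q + λ₁ λ₂ (1 - q)`, forces
`q = λ₁λ₂ / (1 − λ₁ + λ₁λ₂)`; conversely, for this `q` the mixture is stationary.
-/

section PriorityChain

variable (l1 l2 : ℝ)

noncomputable def prioBothFull : ℝ := l1 * l2 / (1 - l1 + l1 * l2)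

/-- The row `prioTrans l1 l2 (false, false)` is the common row of all states but `(1,1)`. -/
def prioMix (x : ℝ) (s : Bool × Bool) : ℝ :=
  x * prioTrans l1 l2 (true, true) s + (1 - x) * prioTrans l1 l2 (false, false) s

theorem prioTrans_nonneg (h1 : 0 ≤ l1) (h1' : l1 ≤ 1) (h2 : 0 ≤ l2) (h2' : l2 ≤ 1)
    (s s' : Bool × Bool) : 0 ≤ prioTrans l1 l2 s s' := by
  unfold prioTrans
  split_ifs <;> positivity

theorem sum_prioTrans (s : Bool × Bool) : ∑ s', prioTrans l1 l2 s s' = 1 := by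
  by_cases hs : s = (true, true) <;> simp [prioTrans, hs, Fintype.sum_prod_type]; ring

theorem prioTrans_of_ne (s : Bool × Bool) (hs : s ≠ (true, true)) :
    prioTrans l1 l2 s = prioTrans l1 l2 (false, false) := by
  funext s'
  simp [prioTrans, hs]

theorem sum_mul_prioTrans {ν : Bool × Bool → ℝ} (hν : ∑ s, ν s = 1) (s' : Bool × Bool) :
    ∑ s, ν s * prioTrans l1 l2 s s' = prioMix l1 l2 (ν (true, true)) s' := by
  have hrest : ∑ s ∈ univ.erase (true, true), ν s = 1 - ν (true, true) := by
    rw [← hν, ← Finset.add_sum_erase _ _ (mem_univ _), add_sub_cancel_left]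
  rw [← Finset.add_sum_erase _ _ (mem_univ (true, true)), prioMix, ← hrest, Finset.sum_mul]
  refine congrArg (_ + ·) (Finset.sum_congr rfl fun s hs => ?_)
  rw [prioTrans_of_ne l1 l2 s (Finset.ne_of_mem_erase hs)]

theorem sum_prioMix (x : ℝ) : ∑ s, prioMix l1 l2 x s = 1 := by
  simp only [prioMix, Finset.sum_add_distrib, ← Finset.mul_sum, sum_prioTrans]
  ring

theorem prioMix_nonneg (h1 : 0 ≤ l1) (h1' : l1 ≤ 1) (h2 : 0 ≤ l2) (h2' : l2 ≤ 1)
    {x : ℝ} (hx : 0 ≤ x) (hx' : x ≤ 1) (s : Bool × Bool) : 0 ≤ prioMix l1 l2 x s := by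
  have := prioTrans_nonneg l1 l2 h1 h1' h2 h2'
  unfold prioMix
  exact add_nonneg (mul_nonneg hx (this _ _)) (mul_nonneg (by linarith) (this _ _))

theorem prioMix_true_true (x : ℝ) :
    prioMix l1 l2 x (true, true) = l1 * x + l1 * l2 * (1 - x) := by
  simp [prioMix, prioTrans]
  ring

theorem prioMix_false_false (x : ℝ) :
    prioMix l1 l2 x (false, false) = (1 - x) * (1 - l1) * (1 - l2) := by
  simp [prioMix, prioTrans]
  ring

theorem eq_prioBothFull_iff (hD : 1 - l1 + l1 * l2 ≠ 0) {x : ℝ} :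
    l1 * x + l1 * l2 * (1 - x) = x ↔ x = prioBothFull l1 l2 := by
  rw [prioBothFull, eq_div_iff hD]
  constructor <;> intro h <;> linarith

theorem prioBothFull_mem_Icc (h1 : 0 ≤ l1) (h1' : l1 < 1) (h2 : 0 ≤ l2) :
    prioBothFull l1 l2 ∈ Set.Icc 0 1 := by
  have hD : 0 < 1 - l1 + l1 * l2 := by nlinarith
  rw [prioBothFull, Set.mem_Icc, div_le_one hD]
  exact ⟨by positivity, by linarith⟩

theorem isStationaryPrio_prioMix (h1 : 0 ≤ l1) (h1' : l1 < 1) (h2 : 0 ≤ l2) (h2' : l2 ≤ 1) :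
    IsStationaryPrio l1 l2 (prioMix l1 l2 (prioBothFull l1 l2)) := by
  have hD : 1 - l1 + l1 * l2 ≠ 0 := by nlinarith
  obtain ⟨hq, hq'⟩ := prioBothFull_mem_Icc l1 l2 h1 h1' h2
  refine ⟨prioMix_nonneg l1 l2 h1 h1'.le h2 h2' hq hq', sum_prioMix l1 l2 _, fun s' => ?_⟩
  rw [sum_mul_prioTrans l1 l2 (sum_prioMix l1 l2 _), prioMix_true_true,
    (eq_prioBothFull_iff l1 l2 hD).2 rfl]

end PriorityChain

theorem IsStationaryPrio.eq_prioMix {l1 l2 : ℝ} {ν : Bool × Bool → ℝ}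
    (hν : IsStationaryPrio l1 l2 ν) (hD : 1 - l1 + l1 * l2 ≠ 0) :
    ν = prioMix l1 l2 (prioBothFull l1 l2) := by
  have hmix : ν = prioMix l1 l2 (ν (true, true)) :=
    funext fun s' => (hν.2.2 s').trans (sum_mul_prioTrans l1 l2 hν.2.1 s')
  have hq : ν (true, true) = prioBothFull l1 l2 := by
    rw [← eq_prioBothFull_iff l1 l2 hD, ← prioMix_true_true, ← hmix]
  rwa [hq] at hmix

/-- Appendix A: the priority chain has a unique stationary distribution;
its probability of state `(1,1)` is `q = λ₁λ₂/(1−λ₁+λ₁λ₂)` and its stationary throughput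
(probability of a nonempty state) is `1 − (1−q)(1−λ₁)(1−λ₂)`. In particular
`θ(1/2, 1/4) = 7/10 > 19/28 = θ(1/4, 1/2)`: priority to the higher-rate queue (Max-λ)
strictly beats priority to the lower-rate queue (Min-λ). -/
theorem stmt17 (l1 l2 : ℝ) (h1 : 0 < l1) (h1' : l1 < 1) (h2 : 0 < l2) (h2' : l2 < 1) :
    (∃! ν : Bool × Bool → ℝ, IsStationaryPrio l1 l2 ν) ∧
    (∀ ν : Bool × Bool → ℝ, IsStationaryPrio l1 l2 ν →
      ν (true, true) = l1 * l2 / (1 - l1 + l1 * l2) ∧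
      1 - ν (false, false) = prioThroughput l1 l2) ∧
    prioThroughput (1/2) (1/4) = 7/10 ∧
    prioThroughput (1/4) (1/2) = 19/28 ∧
    prioThroughput (1/4) (1/2) < prioThroughput (1/2) (1/4) := by
  have hD : 1 - l1 + l1 * l2 ≠ 0 := by nlinarith
  refine ⟨⟨_, isStationaryPrio_prioMix l1 l2 h1.le h1' h2.le h2'.le,
      fun ν hν => hν.eq_prioMix hD⟩, fun ν hν => ?_, ?_, ?_, ?_⟩
  · have hq := (eq_prioBothFull_iff l1 l2 hD).2 rfl
    rw [hν.eq_prioMix hD, prioMix_true_true, hq, prioMix_false_false]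
    exact ⟨rfl, rfl⟩
  all_goals norm_num [prioThroughput]
end
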